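/- arXiv:1410.6779 — 7 statements merged into one kernel-verified Lean document; each statement's English description precedes it below -/
import Mathlib

section
/- Let N ≥ 1 be an integer, Ω ⊂ ℝ^N a bounded open set, l ≥ 1 an integer, and 0 < ε < 1, 0 < r < 1. Then there exist ε̄ > 0 and r̄ > 0 (depending only on Ω, l, ε, r) with the following property: for every nonnegative integrable function f on Ω with ∫_Ω f dx = 1 such that ∫_{Ω ∩ ⋃_{i=1}^{l} B_r(p_i)} f dx < 1 − ε for every choice of l points p_1, …, p_l in the closure of Ω, there exist l+1 points p̄_1, …, p̄_{l+1} in the closure of Ω such that ∫_{Ω ∩ B_{r̄}(p̄_i)} f dx ≥ ε̄ for every i = 1, …, l+1 and the balls B_{2r̄}(p̄_i), i = 1, …, l+1, are pairwise disjoint. -/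
/-!
Cover `Ω` by `M` balls of radius `r / 5` centred in `Ω` and take `ε̄ = ε / M`, `r̄ = r / 5`.
Points are chosen greedily: given `k ≤ l` points, the hypothesis (padded to `l` points) leaves
mass `> ε` in `Ω` outside the `r`-balls around them, so by pigeonhole one of the covering balls
carries mass `≥ ε / M` there. Its centre is within `r / 5` of a point at distance `≥ r` from
the earlier points, hence at distance `≥ 4 r̄` from them, and the `2 r̄`-balls stay disjoint.
-/

open MeasureTheory Real Metric Set
open scoped ENNReal

open Finset in
theorem setIntegral_le_sum_setIntegral_inter {α ι : Type*} [MeasurableSpace α] {μ : Measure α}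
    {f : α → ℝ} (hf : ∀ x, 0 ≤ f x) {u : ι → Set α} (hu : ∀ i, MeasurableSet (u i))
    (T : Finset ι) {S : Set α} (hS : IntegrableOn f S μ) (hST : S ⊆ ⋃ i ∈ T, u i) :
    ∫ x in S, f x ∂μ ≤ ∑ i ∈ T, ∫ x in S ∩ u i, f x ∂μ := by
  classical
  induction T using Finset.induction generalizing S with
  | empty => simp_all
  | insert a T ha ih =>
    have hrest : S \ u a ⊆ ⋃ i ∈ T, u i := fun x hx => by
      simpa [hx.2] using hST hx.1
    calc ∫ x in S, f x ∂μ = ∫ x in S ∩ u a, f x ∂μ + ∫ x in S \ u a, f x ∂μ :=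
          (integral_inter_add_sdiff (hu a) hS).symm
      _ ≤ ∫ x in S ∩ u a, f x ∂μ + ∑ i ∈ T, ∫ x in (S \ u a) ∩ u i, f x ∂μ := by
          gcongr; exact ih (hS.mono_set sdiff_subset) hrest
      _ ≤ ∫ x in S ∩ u a, f x ∂μ + ∑ i ∈ T, ∫ x in S ∩ u i, f x ∂μ := by
          refine (add_le_add_iff_left _).2 (sum_le_sum fun i _ => ?_)
          exact setIntegral_mono_set (hS.mono_set inter_subset_left) (.of_forall fun x => hf x)
            (.of_forall (inter_subset_inter_left _ sdiff_subset))
      _ = ∑ i ∈ insert a T, ∫ x in S ∩ u i, f x ∂μ := by rw [sum_insert ha]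

open Finset in
theorem exists_div_card_lt_setIntegral_inter {α ι : Type*} [MeasurableSpace α] {μ : Measure α}
    {f : α → ℝ} (hf : ∀ x, 0 ≤ f x) {u : ι → Set α} (hu : ∀ i, MeasurableSet (u i))
    (T : Finset ι) {S : Set α} (hS : IntegrableOn f S μ) (hST : S ⊆ ⋃ i ∈ T, u i)
    {ε : ℝ} (hε : 0 ≤ ε) (hmass : ε < ∫ x in S, f x ∂μ) :
    ∃ i ∈ T, ε / T.card < ∫ x in S ∩ u i, f x ∂μ := by
  refine exists_lt_of_sum_lt (lt_of_le_of_lt ?_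
    (hmass.trans_le (setIntegral_le_sum_setIntegral_inter hf hu T hS hST)))
  rw [sum_const, nsmul_eq_mul]
  rcases T.eq_empty_or_nonempty with rfl | hT
  · simpa using hε
  · rw [mul_div_cancel₀ _ (by positivity)]

theorem Fin.exists_tuple_of_exists_snoc {α : Type*} (P : ∀ {k : ℕ}, (Fin k → α) → Prop)
    (h0 : P Fin.elim0) {n : ℕ}
    (hstep : ∀ k < n, ∀ q : Fin k → α, P q → ∃ c, P (Fin.snoc q c : Fin (k + 1) → α)) :
    ∃ q : Fin n → α, P q := by
  suffices ∀ m ≤ n, ∃ q : Fin m → α, P q from this n le_rfl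
  intro m hm
  induction m with
  | zero => exact ⟨_, h0⟩
  | succ m ih =>
    obtain ⟨q, hq⟩ := ih (Nat.le_of_succ_le hm)
    obtain ⟨c, hc⟩ := hstep m hm q hq
    exact ⟨_, hc⟩

theorem Fin.exists_mem_extend_castLE {α : Type*} {s : Set α} (hs : s.Nonempty) {k l : ℕ}
    (hkl : k ≤ l) {q : Fin k → α} (hq : ∀ i, q i ∈ s) :
    ∃ p : Fin l → α, (∀ i, p i ∈ s) ∧ ∀ i, p (Fin.castLE hkl i) = q i := by
  obtain ⟨z, hz⟩ := hs
  refine ⟨fun j => if h : (j : ℕ) < k then q ⟨j, h⟩ else z, fun j => ?_, fun i => by simp⟩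
  dsimp only
  split_ifs
  exacts [hq _, hz]

section MetricSpace

variable {E : Type*} [PseudoMetricSpace E] [MeasurableSpace E] {μ : Measure E} {f : E → ℝ}
  {Ω : Set E}

def HeavySeparatedBalls (μ : Measure E) (Ω : Set E) (f : E → ℝ) (ε ρ : ℝ) {ι : Type*}
    (q : ι → E) : Prop :=
  (∀ i, q i ∈ closure Ω) ∧ (∀ i, ε ≤ ∫ x in Ω ∩ ball (q i) ρ, f x ∂μ) ∧
    Pairwise fun i j => Disjoint (ball (q i) (2 * ρ)) (ball (q j) (2 * ρ))

theorem HeavySeparatedBalls.elim0 (ε ρ : ℝ) :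
    HeavySeparatedBalls μ Ω f ε ρ (Fin.elim0 : Fin 0 → E) :=
  ⟨finZeroElim, finZeroElim, fun i => i.elim0⟩

theorem HeavySeparatedBalls.snoc {ε ρ : ℝ} {k : ℕ} {q : Fin k → E}
    (hq : HeavySeparatedBalls μ Ω f ε ρ q) {c : E} (hcΩ : c ∈ closure Ω)
    (hc : ε ≤ ∫ x in Ω ∩ ball c ρ, f x ∂μ)
    (hdisj : ∀ i, Disjoint (ball c (2 * ρ)) (ball (q i) (2 * ρ))) :
    HeavySeparatedBalls μ Ω f ε ρ (Fin.snoc q c : Fin (k + 1) → E) := by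
  obtain ⟨hqΩ, hqmass, hqdisj⟩ := hq
  refine ⟨Fin.lastCases (by simpa) (by simpa), Fin.lastCases (by simpa) (by simpa), ?_⟩
  intro i j hij
  induction i using Fin.lastCases with
  | last =>
    induction j using Fin.lastCases with
    | last => exact absurd rfl hij
    | cast j => simpa using hdisj j
  | cast i =>
    induction j using Fin.lastCases with
    | last => simpa using (hdisj i).symm
    | cast j => simpa using hqdisj fun h => hij (congrArg Fin.castSucc h)

theorem lt_setIntegral_sdiff_iUnion_ball [OpensMeasurableSpace E] (hf : ∀ x, 0 ≤ f x)
    (hfΩ : IntegrableOn f Ω μ) (hΩ1 : ∫ x in Ω, f x ∂μ = 1) {s : Set E} (hs : s.Nonempty)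
    {l : ℕ} {r ε : ℝ}
    (hsmall : ∀ p : Fin l → E, (∀ i, p i ∈ s) → ∫ x in Ω ∩ ⋃ i, ball (p i) r, f x ∂μ < 1 - ε)
    {k : ℕ} (hkl : k ≤ l) {q : Fin k → E} (hq : ∀ i, q i ∈ s) :
    ε < ∫ x in Ω \ ⋃ i, ball (q i) r, f x ∂μ := by
  obtain ⟨p, hps, hpq⟩ := Fin.exists_mem_extend_castLE hs hkl hq
  have hcovered : Ω ∩ ⋃ i, ball (q i) r ⊆ Ω ∩ ⋃ i, ball (p i) r :=
    inter_subset_inter_right _ <|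
      iUnion_subset fun i => hpq i ▸ subset_iUnion (fun j => ball (p j) r) _
  have hmono : ∫ x in Ω ∩ ⋃ i, ball (q i) r, f x ∂μ ≤ ∫ x in Ω ∩ ⋃ i, ball (p i) r, f x ∂μ :=
    setIntegral_mono_set (hfΩ.mono_set inter_subset_left) (.of_forall fun x => hf x)
      (.of_forall hcovered)
  have hsplit := integral_inter_add_sdiff (t := ⋃ i, ball (q i) r)
    (isOpen_iUnion fun _ => isOpen_ball).measurableSet hfΩ
  linarith [hsmall p hps]

theorem exists_heavy_ball_far_from [OpensMeasurableSpace E] (hf : ∀ x, 0 ≤ f x)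
    (hfΩ : IntegrableOn f Ω μ) {ρ R ε : ℝ} (hR : 5 * ρ ≤ R) (hε : 0 ≤ ε) {T : Finset E}
    (hT : Ω ⊆ ⋃ c ∈ T, ball c ρ) {ι : Type*} (q : ι → E)
    (hmass : ε < ∫ x in Ω \ ⋃ i, ball (q i) R, f x ∂μ) :
    ∃ c ∈ T, ε / T.card ≤ ∫ x in Ω ∩ ball c ρ, f x ∂μ ∧
      ∀ i, Disjoint (ball c (2 * ρ)) (ball (q i) (2 * ρ)) := by
  obtain ⟨c, hcT, hc⟩ := exists_div_card_lt_setIntegral_inter hf (fun c => measurableSet_ball) T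
    (hfΩ.mono_set sdiff_subset) (sdiff_subset.trans hT) hε hmass
  obtain ⟨x, ⟨-, hxq⟩, hxc⟩ : ((Ω \ ⋃ i, ball (q i) R) ∩ ball c ρ).Nonempty := by
    by_contra h
    rw [not_nonempty_iff_eq_empty] at h
    rw [h, setIntegral_empty] at hc
    exact hc.not_ge (by positivity)
  refine ⟨c, hcT, hc.le.trans (setIntegral_mono_set (hfΩ.mono_set inter_subset_left)
    (.of_forall fun x => hf x) (.of_forall (inter_subset_inter_left _ sdiff_subset))),
    fun i => ball_disjoint_ball ?_⟩
  have hxqi : R ≤ dist x (q i) := not_lt.1 fun h => hxq (mem_iUnion.2 ⟨i, h⟩)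
  linarith [dist_triangle x c (q i), mem_ball.1 hxc]

end MetricSpace

theorem mass_spreading_criterium_general (N : ℕ)
    (Ω : Set (EuclideanSpace ℝ (Fin N))) (hΩb : Bornology.IsBounded Ω)
    (l : ℕ) (ε r : ℝ) (hε : 0 < ε) (hr : 0 < r) :
    ∃ εb : ℝ, 0 < εb ∧ ∃ rb : ℝ, 0 < rb ∧
      ∀ f : EuclideanSpace ℝ (Fin N) → ℝ,
        (∀ x, 0 ≤ f x) → IntegrableOn f Ω volume → (∫ x in Ω, f x) = 1 →
        (∀ p : Fin l → EuclideanSpace ℝ (Fin N), (∀ i, p i ∈ closure Ω) →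
          (∫ x in Ω ∩ ⋃ i, Metric.ball (p i) r, f x) < 1 - ε) →
        ∃ q : Fin (l + 1) → EuclideanSpace ℝ (Fin N),
          (∀ i, q i ∈ closure Ω) ∧
          (∀ i, εb ≤ ∫ x in Ω ∩ Metric.ball (q i) rb, f x) ∧
          (∀ i j, i ≠ j →
            Disjoint (Metric.ball (q i) (2 * rb)) (Metric.ball (q j) (2 * rb))) := by
  rcases Ω.eq_empty_or_nonempty with rfl | ⟨z, hz⟩
  · exact ⟨1, one_pos, 1, one_pos, fun f _ _ h => by simp at h⟩
  obtain ⟨T, hTΩ, hTfin, hT⟩ :=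
    exists_finite_cover_balls_of_isCompact_closure hΩb.isCompact_closure
      (by positivity : 0 < r / 5)
  lift T to Finset (EuclideanSpace ℝ (Fin N)) using hTfin
  have hTne : T.Nonempty := by
    obtain ⟨c, hc, -⟩ := mem_iUnion₂.1 (hT hz)
    exact ⟨c, hc⟩
  refine ⟨ε / T.card, by positivity, r / 5, by positivity, fun f hf hfΩ hΩ1 hsmall => ?_⟩
  obtain ⟨q, hq⟩ := Fin.exists_tuple_of_exists_snoc
    (HeavySeparatedBalls volume Ω f (ε / T.card) (r / 5)) (.elim0 _ _) (n := l + 1)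
    fun k hk q hq => by
      obtain ⟨c, hcT, hc, hdisj⟩ := exists_heavy_ball_far_from hf hfΩ (by linarith) hε.le hT q
        (lt_setIntegral_sdiff_iUnion_ball hf hfΩ hΩ1 ⟨z, subset_closure hz⟩ hsmall
          (Nat.lt_succ_iff.1 hk) hq.1)
      exact ⟨c, hq.snoc (subset_closure (hTΩ hcT)) hc hdisj⟩
  exact ⟨q, hq.1, hq.2.1, hq.2.2⟩

/-- Covering-type criterium: if no `l` balls of radius `r` capture mass `1 − ε` of `f`,
then there are `l+1` well-separated balls of radius `r̄` each carrying mass at least `ε̄`. -/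
theorem mass_spreading_criterium (N : ℕ) (hN : 1 ≤ N)
    (Ω : Set (EuclideanSpace ℝ (Fin N))) (hΩo : IsOpen Ω) (hΩb : Bornology.IsBounded Ω)
    (l : ℕ) (hl : 1 ≤ l) (ε r : ℝ) (hε : 0 < ε) (hε1 : ε < 1) (hr : 0 < r) (hr1 : r < 1) :
    ∃ εb : ℝ, 0 < εb ∧ ∃ rb : ℝ, 0 < rb ∧
      ∀ f : EuclideanSpace ℝ (Fin N) → ℝ,
        (∀ x, 0 ≤ f x) → IntegrableOn f Ω volume → (∫ x in Ω, f x) = 1 →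
        (∀ p : Fin l → EuclideanSpace ℝ (Fin N), (∀ i, p i ∈ closure Ω) →
          (∫ x in Ω ∩ ⋃ i, Metric.ball (p i) r, f x) < 1 - ε) →
        ∃ q : Fin (l + 1) → EuclideanSpace ℝ (Fin N),
          (∀ i, q i ∈ closure Ω) ∧
          (∀ i, εb ≤ ∫ x in Ω ∩ Metric.ball (q i) rb, f x) ∧
          (∀ i j, i ≠ j →
            Disjoint (Metric.ball (q i) (2 * rb)) (Metric.ball (q j) (2 * rb))) :=
  mass_spreading_criterium_general N Ω hΩb l ε r hε hr
end

section
/- Let N ≥ 2 be an integer, Ω ⊂ ℝ^N a bounded open set, δ > 0, and let χ : ℝ^N → [0,1] be a smooth function with compact support contained in Ω and χ = 1 on {x ∈ Ω : dist(x, ℝ^N∖Ω) > δ/2}; set K = {x ∈ Ω : dist(x, ℝ^N∖Ω) ≥ δ} and assume K ≠ ∅. Let C_0 ≥ 1 and V : ℝ^N → ℝ be Lipschitz with constant C_0 and satisfy 1/C_0 ≤ V(x) ≤ C_0 on the closure of Ω. Fix an integer m ≥ 1. For points p_1, …, p_m ∈ K, weights t_1, …, t_m ≥ 0 with Σ t_i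 = 1, and ε > 0, define φ_{ε,σ}(x) = χ(x) log Σ_{i=1}^{m} t_i F_N / ( (ε^{N/(N−1)} + |x−p_i|^{N/(N−1)})^N V(p_i) ), where F_N = N (N²/(N−1))^{N−1}. Then there exist constants C > 0 and ε_0 > 0 such that for all ε ∈ (0, ε_0], all p_1,…,p_m ∈ K and all weights t_1,…,t_m as above, | ∫_Ω φ V e^{φ_{ε,σ}} dx / ∫_Ω V e^{φ_{ε,σ}} dx − Σ_{i=1}^{m} t_i φ(p_i) | ≤ C ε for every function φ : ℝ^N → ℝ which is 1-Lipschitz on the closure of Ω and satisfies |φ| ≤ 1 there. -/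
open MeasureTheory Real Metric Set
open scoped ENNReal

noncomputable def omegaN (N : ℕ) : ℝ :=
  (volume (Metric.ball (0 : EuclideanSpace ℝ (Fin N)) 1)).toReal

noncomputable def cN (N : ℕ) : ℝ :=
  N * ((N : ℝ) ^ 2 / ((N : ℝ) - 1)) ^ (N - 1) * omegaN N

noncomputable def FN (N : ℕ) : ℝ :=
  N * ((N : ℝ) ^ 2 / ((N : ℝ) - 1)) ^ (N - 1)

/-- The test function `φ_{ε,σ}` associated to the formal barycenter
`σ = Σ tᵢ δ_{pᵢ}`, built from the standard bubbles and localized by `χ`. -/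
noncomputable def testFun (N m : ℕ) (χ V : EuclideanSpace ℝ (Fin N) → ℝ)
    (p : Fin m → EuclideanSpace ℝ (Fin N)) (t : Fin m → ℝ) (ε : ℝ)
    (x : EuclideanSpace ℝ (Fin N)) : ℝ :=
  χ x * Real.log (∑ i, t i * (FN N /
    ((ε ^ ((N : ℝ) / ((N : ℝ) - 1)) + ‖x - p i‖ ^ ((N : ℝ) / ((N : ℝ) - 1))) ^ N * V (p i))))

namespace BubbleAux

/-- the scaling exponent γ = N/(N-1) -/
noncomputable def gam (N : ℕ) : ℝ := (N : ℝ) / ((N : ℝ) - 1)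

variable {N : ℕ}

lemma Nsub_pos (hN : 2 ≤ N) : (0:ℝ) < (N:ℝ) - 1 := by
  have : (2:ℝ) ≤ N := by exact_mod_cast hN
  linarith

lemma one_lt_gam (hN : 2 ≤ N) : 1 < gam N := by
  have h := Nsub_pos hN
  rw [gam, lt_div_iff₀ h]; linarith

lemma gam_pos (hN : 2 ≤ N) : 0 < gam N := lt_trans one_pos (one_lt_gam hN)

lemma gam_mul_sub (hN : 2 ≤ N) : gam N * ((N:ℝ) - 1) = N := by
  rw [gam, div_mul_cancel₀]; exact (Nsub_pos hN).ne'

/-- N - γN = -γ -/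
lemma N_sub_gamN (hN : 2 ≤ N) : (N:ℝ) - gam N * N = -gam N := by
  have h := gam_mul_sub hN
  ring_nf
  ring_nf at h
  linarith

lemma FN_pos (hN : 2 ≤ N) : 0 < FN N := by
  have h0 : (0:ℝ) < N := by positivity
  have h := Nsub_pos hN
  have : (0:ℝ) < (N : ℝ)^2 / ((N:ℝ) - 1) := by positivity
  exact mul_pos h0 (pow_pos this _)

/-- the standard bubble -/
noncomputable def g (N : ℕ) (ε : ℝ) (y : EuclideanSpace ℝ (Fin N)) : ℝ :=
  FN N / ((ε ^ gam N + ‖y‖ ^ gam N) ^ N)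

lemma g_pos (hN : 2 ≤ N) {ε : ℝ} (hε : 0 < ε) (y : EuclideanSpace ℝ (Fin N)) :
    0 < g N ε y := by
  have h1 : (0:ℝ) < ε ^ gam N := rpow_pos_of_pos hε _
  have h2 : (0:ℝ) ≤ ‖y‖ ^ gam N := rpow_nonneg (norm_nonneg _) _
  exact div_pos (FN_pos hN) (pow_pos (by linarith) _)

lemma g_nonneg (hN : 2 ≤ N) {ε : ℝ} (hε : 0 < ε) (y : EuclideanSpace ℝ (Fin N)) :
    0 ≤ g N ε y := (g_pos hN hε y).le

lemma continuous_g (hN : 2 ≤ N) {ε : ℝ} (hε : 0 < ε) :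
    Continuous (g N ε) := by
  have h1 : (0:ℝ) < ε ^ gam N := rpow_pos_of_pos hε _
  apply Continuous.div continuous_const
  · apply Continuous.pow
    exact continuous_const.add (continuous_norm.rpow_const
      (fun x => Or.inr (gam_pos hN).le))
  · intro x
    have h2 : (0:ℝ) ≤ ‖x‖ ^ gam N := rpow_nonneg (norm_nonneg _) _
    positivity

end BubbleAux

namespace BubbleAux
variable {N : ℕ}

/-- pointwise comparison: (1+t)^γ ≤ 2^γ (1 + t^γ) for t ≥ 0 -/
lemma one_add_rpow (hN : 2 ≤ N) {t : ℝ} (ht : 0 ≤ t) :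
    (1 + t) ^ gam N ≤ 2 ^ gam N * (1 + t ^ gam N) := by
  have hγ : 0 ≤ gam N := (gam_pos hN).le
  have h1 : (1 + t) ≤ 2 * max 1 t := by
    rcases le_total t 1 with h | h
    · simp [max_eq_left h]; linarith
    · simp [max_eq_right h]; linarith
  calc (1 + t) ^ gam N ≤ (2 * max 1 t) ^ gam N :=
        rpow_le_rpow (by linarith) h1 hγ
    _ = 2 ^ gam N * (max 1 t) ^ gam N := mul_rpow (by norm_num) (le_max_of_le_left zero_le_one)
    _ ≤ 2 ^ gam N * (1 + t ^ gam N) := by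
        apply mul_le_mul_of_nonneg_left _ (rpow_nonneg (by norm_num) _)
        rcases le_total t 1 with h | h
        · rw [max_eq_left h, one_rpow]
          have : 0 ≤ t ^ gam N := rpow_nonneg ht _
          linarith
        · rw [max_eq_right h]
          have : 0 ≤ (1:ℝ) := zero_le_one
          nlinarith [rpow_nonneg ht (gam N)]

/-- lower bound for the denominator of g 1 in terms of the japanese bracket -/
lemma g_one_le (hN : 2 ≤ N) (y : EuclideanSpace ℝ (Fin N)) :
    g N 1 y ≤ FN N * 2 ^ (gam N * N) * (1 + ‖y‖) ^ (-(gam N * N)) := by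
  have hγ : 0 < gam N := gam_pos hN
  have hden : ((1 + ‖y‖) / 2) ^ (gam N * N) ≤ (1 ^ gam N + ‖y‖ ^ gam N) ^ N := by
    rw [one_rpow]
    have h1 : (1 + ‖y‖) ^ gam N / 2 ^ gam N ≤ 1 + ‖y‖ ^ gam N := by
      rw [div_le_iff₀ (by positivity)]
      calc (1 + ‖y‖) ^ gam N ≤ 2 ^ gam N * (1 + ‖y‖ ^ gam N) := one_add_rpow hN (norm_nonneg y)
        _ = (1 + ‖y‖ ^ gam N) * 2 ^ gam N := by ring
    have h2 : ((1 + ‖y‖) / 2) ^ gam N = (1 + ‖y‖) ^ gam N / 2 ^ gam N :=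
      Real.div_rpow (by positivity) (by norm_num) _
    have h3 : ((1 + ‖y‖) / 2) ^ (gam N * N) = (((1 + ‖y‖) / 2) ^ gam N) ^ (N:ℕ) := by
      rw [← rpow_natCast (((1 + ‖y‖) / 2) ^ gam N) N, ← rpow_mul (by positivity)]
    rw [h3, h2]
    apply pow_le_pow_left₀ (by positivity) h1
  have hpos : (0:ℝ) < ((1 + ‖y‖)/2) ^ (gam N * N) := rpow_pos_of_pos (by positivity) _
  have : g N 1 y ≤ FN N / ((1 + ‖y‖)/2) ^ (gam N * N) := by
    apply div_le_div_of_nonneg_left (FN_pos hN).le hpos hden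
  refine this.trans (le_of_eq ?_)
  rw [Real.div_rpow (by positivity) (by norm_num), rpow_neg (by positivity)]
  field_simp

lemma gamN_gt (hN : 2 ≤ N) : (N:ℝ) + 1 < gam N * N := by
  have h := N_sub_gamN hN
  have hγ := one_lt_gam hN
  have hNN : (2:ℝ) ≤ N := by exact_mod_cast hN
  nlinarith

/-- integrability of ‖z‖^a * g 1 z for a ∈ {0,1} -/
lemma integrable_g_one (hN : 2 ≤ N) (a : ℕ) (ha : a ≤ 1) :
    Integrable (fun z : EuclideanSpace ℝ (Fin N) => ‖z‖ ^ a * g N 1 z) := by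
  have hdim : (Module.finrank ℝ (EuclideanSpace ℝ (Fin N)) : ℝ) = N := by
    rw [finrank_euclideanSpace_fin]
  have hr : (Module.finrank ℝ (EuclideanSpace ℝ (Fin N)) : ℝ) < gam N * N - a := by
    rw [hdim]
    have := gamN_gt hN
    have : (a:ℝ) ≤ 1 := by exact_mod_cast ha
    linarith [gamN_gt hN]
  have hint := (integrable_one_add_norm (μ := (volume : Measure (EuclideanSpace ℝ (Fin N)))) hr).const_mul (FN N * 2 ^ (gam N * N))
  apply hint.mono'
  · apply Continuous.aestronglyMeasurable
    exact (continuous_norm.pow a).mul (continuous_g hN one_pos)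
  · filter_upwards with z
    have h1 : 0 ≤ g N 1 z := g_nonneg hN one_pos z
    have h2 : ‖z‖ ^ a * g N 1 z ≤ (1 + ‖z‖) ^ a * (FN N * 2 ^ (gam N * N) * (1 + ‖z‖) ^ (-(gam N * N))) := by
      apply mul_le_mul _ (g_one_le hN z) h1 (by positivity)
      exact pow_le_pow_left₀ (norm_nonneg z) (by linarith [norm_nonneg z]) a
    rw [Real.norm_eq_abs, abs_of_nonneg (by positivity)]
    refine h2.trans (le_of_eq ?_)
    have h3 : ((1:ℝ) + ‖z‖) ^ a = (1 + ‖z‖) ^ (a:ℝ) := by rw [rpow_natCast]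
    rw [h3]
    rw [show (1 + ‖z‖) ^ (a:ℝ) * (FN N * 2 ^ (gam N * N) * (1 + ‖z‖) ^ (-(gam N * N)))
      = FN N * 2 ^ (gam N * N) * ((1 + ‖z‖) ^ (a:ℝ) * (1 + ‖z‖) ^ (-(gam N * N))) by ring]
    rw [← rpow_add (by positivity)]
    congr 1
    ring

end BubbleAux

namespace BubbleAux
variable {N : ℕ}

lemma g_smul (hN : 2 ≤ N) {ε : ℝ} (hε : 0 < ε) (z : EuclideanSpace ℝ (Fin N)) :
    g N ε (ε • z) = ((ε ^ gam N) ^ N)⁻¹ * g N 1 z := by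
  have hγ : 0 < gam N := gam_pos hN
  have h1 : ‖ε • z‖ = ε * ‖z‖ := by
    rw [norm_smul, Real.norm_eq_abs, abs_of_pos hε]
  have h2 : ε ^ gam N + ‖ε • z‖ ^ gam N = ε ^ gam N * (1 ^ gam N + ‖z‖ ^ gam N) := by
    rw [h1, mul_rpow hε.le (norm_nonneg z), one_rpow, mul_add, mul_one]
  rw [g, g, h2, mul_pow]
  have hp1 : (0:ℝ) < (ε ^ gam N) ^ N := pow_pos (rpow_pos_of_pos hε _) _
  have hp2 : (0:ℝ) < (1 ^ gam N + ‖z‖ ^ gam N) ^ N := by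
    have : (0:ℝ) ≤ ‖z‖ ^ gam N := rpow_nonneg (norm_nonneg _) _
    rw [one_rpow]; positivity
  field_simp

/-- key scaling identity -/
lemma integral_g_scale (hN : 2 ≤ N) (a : ℕ) {ε : ℝ} (hε : 0 < ε) :
    ∫ y : EuclideanSpace ℝ (Fin N), ‖y‖ ^ a * g N ε y
      = ε ^ ((a:ℝ) - gam N) * ∫ z : EuclideanSpace ℝ (Fin N), ‖z‖ ^ a * g N 1 z := by
  have hdim : Module.finrank ℝ (EuclideanSpace ℝ (Fin N)) = N := finrank_euclideanSpace_fin
  have h := MeasureTheory.Measure.integral_comp_smul (μ := (volume : Measure (EuclideanSpace ℝ (Fin N))))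
    (fun y => ‖y‖ ^ a * g N ε y) ε
  have hconst : ∀ z : EuclideanSpace ℝ (Fin N), ‖ε • z‖ ^ a * g N ε (ε • z)
      = (ε ^ a * ((ε ^ gam N) ^ N)⁻¹) * (‖z‖ ^ a * g N 1 z) := by
    intro z
    rw [g_smul hN hε z, norm_smul, Real.norm_eq_abs, abs_of_pos hε, mul_pow]
    ring
  rw [hdim] at h
  simp only [hconst] at h
  rw [integral_const_mul] at h
  -- h : (ε^a * ((ε^γ)^N)⁻¹) * ∫ z, ... = |(ε^N)⁻¹| • ∫ y, ...
  have habs : |((ε:ℝ) ^ (N:ℕ))⁻¹| = (ε ^ (N:ℕ))⁻¹ := by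
    rw [abs_of_pos]; positivity
  rw [habs, smul_eq_mul] at h
  have hNpos : (0:ℝ) < ε ^ (N:ℕ) := pow_pos hε _
  have h2 : ∫ y : EuclideanSpace ℝ (Fin N), ‖y‖ ^ a * g N ε y
      = ε ^ (N:ℕ) * ((ε ^ a * ((ε ^ gam N) ^ N)⁻¹) * ∫ z : EuclideanSpace ℝ (Fin N), ‖z‖ ^ a * g N 1 z) := by
    rw [h]; field_simp
  rw [h2]
  rw [← mul_assoc]
  congr 1
  -- ε^N * (ε^a * ((ε^γ)^N)⁻¹) = ε^(a - γ)
  have e1 : (ε:ℝ) ^ (N:ℕ) = ε ^ ((N:ℕ):ℝ) := (rpow_natCast ε N).symm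
  have e2 : (ε:ℝ) ^ (a:ℕ) = ε ^ ((a:ℕ):ℝ) := (rpow_natCast ε a).symm
  have e3 : ((ε ^ gam N) ^ (N:ℕ)) = ε ^ (gam N * N) := by
    rw [← rpow_natCast (ε ^ gam N) N, ← rpow_mul hε.le]
  rw [e1, e2, e3, ← Real.rpow_neg hε.le, ← Real.rpow_add hε, ← Real.rpow_add hε]
  congr 1
  have := N_sub_gamN hN
  linarith

lemma integrable_g (hN : 2 ≤ N) (a : ℕ) (ha : a ≤ 1) {ε : ℝ} (hε : 0 < ε) :
    Integrable (fun y : EuclideanSpace ℝ (Fin N) => ‖y‖ ^ a * g N ε y) := by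
  have key := (integrable_g_one hN a ha).smul ((ε ^ a * ((ε ^ gam N) ^ N)⁻¹))
  have hcomp : Integrable (fun z : EuclideanSpace ℝ (Fin N) =>
      ‖ε • z‖ ^ a * g N ε (ε • z)) := by
    apply key.congr
    filter_upwards with z
    simp only [Pi.smul_apply, smul_eq_mul]
    rw [g_smul hN hε z, norm_smul, Real.norm_eq_abs, abs_of_pos hε, mul_pow]
    ring
  have := (integrable_comp_smul_iff (volume : Measure (EuclideanSpace ℝ (Fin N)))
    (fun y => ‖y‖ ^ a * g N ε y) (ne_of_gt hε)).mp hcomp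
  exact this

end BubbleAux

namespace BubbleAux
variable {N : ℕ}

lemma integrable_g' (hN : 2 ≤ N) {ε : ℝ} (hε : 0 < ε) :
    Integrable (g N ε) := by
  have := integrable_g hN 0 (le_refl 0 |>.trans zero_le_one) hε
  simpa using this

lemma intA_pos (hN : 2 ≤ N) :
    0 < ∫ z : EuclideanSpace ℝ (Fin N), g N 1 z := by
  have hint : Integrable (g N 1) := integrable_g' hN one_pos
  have h1 : ∫ z in Metric.ball (0 : EuclideanSpace ℝ (Fin N)) 1, g N 1 z
      ≤ ∫ z : EuclideanSpace ℝ (Fin N), g N 1 z :=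
    setIntegral_le_integral hint (Filter.Eventually.of_forall (g_nonneg hN one_pos))
  have h2 : ∫ _z in Metric.ball (0 : EuclideanSpace ℝ (Fin N)) 1, (FN N / 2 ^ N : ℝ)
      ≤ ∫ z in Metric.ball (0 : EuclideanSpace ℝ (Fin N)) 1, g N 1 z := by
    apply setIntegral_mono_on
    · exact integrableOn_const measure_ball_lt_top.ne
    · exact hint.integrableOn
    · exact measurableSet_ball
    · intro z hz
      have hz1 : ‖z‖ < 1 := by simpa using hz
      have hzg : ‖z‖ ^ gam N ≤ 1 :=
        Real.rpow_le_one (norm_nonneg z) hz1.le (gam_pos hN).le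
      have hden : (1 ^ gam N + ‖z‖ ^ gam N) ^ N ≤ 2 ^ N := by
        apply pow_le_pow_left₀ _ _ N
        · have : (0:ℝ) ≤ ‖z‖ ^ gam N := rpow_nonneg (norm_nonneg _) _
          rw [one_rpow]; linarith
        · rw [one_rpow]; linarith
      rw [g]
      apply div_le_div_of_nonneg_left (FN_pos hN).le _ hden
      have : (0:ℝ) ≤ ‖z‖ ^ gam N := rpow_nonneg (norm_nonneg _) _
      rw [one_rpow]; positivity
  rw [setIntegral_const, smul_eq_mul] at h2
  have h3 : 0 < (volume (Metric.ball (0 : EuclideanSpace ℝ (Fin N)) 1)).toReal * (FN N / 2 ^ N) := by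
    apply mul_pos
    · exact ENNReal.toReal_pos (measure_ball_pos volume _ one_pos).ne' measure_ball_lt_top.ne
    · exact div_pos (FN_pos hN) (by positivity)
  linarith [h3.trans_le h2]

lemma measurableSet_tail (ρ : ℝ) :
    MeasurableSet {y : EuclideanSpace ℝ (Fin N) | ρ ≤ ‖y‖} :=
  (isClosed_le continuous_const continuous_norm).measurableSet

lemma integrableOn_tail (hN : 2 ≤ N) {ρ : ℝ} (hρ : 0 < ρ) :
    IntegrableOn (fun y : EuclideanSpace ℝ (Fin N) => FN N * ‖y‖ ^ (-(gam N * N)))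
      {y : EuclideanSpace ℝ (Fin N) | ρ ≤ ‖y‖} volume := by
  have hdim : (Module.finrank ℝ (EuclideanSpace ℝ (Fin N)) : ℝ) = N := by
    rw [finrank_euclideanSpace_fin]
  have hr : (Module.finrank ℝ (EuclideanSpace ℝ (Fin N)) : ℝ) < gam N * N := by
    rw [hdim]; linarith [gamN_gt hN]
  have hmaj := ((integrable_one_add_norm
    (μ := (volume : Measure (EuclideanSpace ℝ (Fin N)))) hr).const_mul
      (FN N * (ρ / (1 + ρ)) ^ (-(gam N * N)))).integrableOn
    (s := {y : EuclideanSpace ℝ (Fin N) | ρ ≤ ‖y‖})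
  apply hmaj.mono'
  · apply Measurable.aestronglyMeasurable
    fun_prop
  · rw [ae_restrict_iff' (measurableSet_tail ρ)]
    filter_upwards with y hy
    have hy' : ρ ≤ ‖y‖ := hy
    have hy0 : 0 < ‖y‖ := lt_of_lt_of_le hρ hy'
    have hkey : ρ / (1 + ρ) * (1 + ‖y‖) ≤ ‖y‖ := by
      have hy := hy'
      rw [div_mul_eq_mul_div, div_le_iff₀ (by linarith)]
      nlinarith
    have hs : (0:ℝ) ≤ gam N * N := mul_nonneg (gam_pos hN).le (Nat.cast_nonneg N)
    have h1 : (ρ / (1 + ρ) * (1 + ‖y‖)) ^ (gam N * N) ≤ ‖y‖ ^ (gam N * N) :=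
      rpow_le_rpow (by positivity) hkey hs
    have h2 : ‖y‖ ^ (-(gam N * N)) ≤ (ρ / (1 + ρ) * (1 + ‖y‖)) ^ (-(gam N * N)) := by
      rw [rpow_neg (norm_nonneg y), rpow_neg (by positivity)]
      apply inv_anti₀ (rpow_pos_of_pos (by positivity) _) h1
    rw [Real.norm_eq_abs, abs_of_nonneg (mul_nonneg (FN_pos hN).le (rpow_nonneg (norm_nonneg y) _))]
    calc FN N * ‖y‖ ^ (-(gam N * N))
        ≤ FN N * (ρ / (1 + ρ) * (1 + ‖y‖)) ^ (-(gam N * N)) :=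
          mul_le_mul_of_nonneg_left h2 (FN_pos hN).le
      _ = FN N * (ρ / (1 + ρ)) ^ (-(gam N * N)) * (1 + ‖y‖) ^ (-(gam N * N)) := by
          rw [mul_rpow (by positivity) (by positivity)]; ring

lemma g_le_pow (hN : 2 ≤ N) {ε : ℝ} (hε : 0 < ε) (y : EuclideanSpace ℝ (Fin N))
    (hy : 0 < ‖y‖) : g N ε y ≤ FN N * ‖y‖ ^ (-(gam N * N)) := by
  have h1 : ‖y‖ ^ (gam N * N) ≤ (ε ^ gam N + ‖y‖ ^ gam N) ^ N := by
    have : ‖y‖ ^ (gam N * N) = (‖y‖ ^ gam N) ^ (N:ℕ) := by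
      rw [← rpow_natCast (‖y‖ ^ gam N) N, ← rpow_mul (norm_nonneg y)]
    rw [this]
    apply pow_le_pow_left₀ (rpow_nonneg (norm_nonneg y) _)
    have : 0 < ε ^ gam N := rpow_pos_of_pos hε _
    linarith
  rw [g, rpow_neg (norm_nonneg y), ← div_eq_mul_inv]
  apply div_le_div_of_nonneg_left (FN_pos hN).le (rpow_pos_of_pos hy _) h1

/-- translation for set integrals -/
lemma setIntegral_sub_translate (f : EuclideanSpace ℝ (Fin N) → ℝ)
    (p : EuclideanSpace ℝ (Fin N)) (s : Set (EuclideanSpace ℝ (Fin N))) (hs : MeasurableSet s) :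
    ∫ x in (fun x => x - p) ⁻¹' s, f (x - p) = ∫ y in s, f y := by
  exact (measurePreserving_sub_right volume p).setIntegral_preimage_emb
    (MeasurableEquiv.subRight p).measurableEmbedding f s

/-- the uniform-in-ε tail bound -/
lemma tail_bound (hN : 2 ≤ N) {ρ : ℝ} (hρ : 0 < ρ) {ε : ℝ} (hε : 0 < ε)
    (p : EuclideanSpace ℝ (Fin N)) {s : Set (EuclideanSpace ℝ (Fin N))}
    (hs : MeasurableSet s) (hsub : s ⊆ {x | ρ ≤ ‖x - p‖}) :
    ∫ x in s, g N ε (x - p)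
      ≤ ∫ y in {y : EuclideanSpace ℝ (Fin N) | ρ ≤ ‖y‖}, FN N * ‖y‖ ^ (-(gam N * N)) := by
  have hTset : (fun x : EuclideanSpace ℝ (Fin N) => x - p) ⁻¹' {y | ρ ≤ ‖y‖}
      = {x : EuclideanSpace ℝ (Fin N) | ρ ≤ ‖x - p‖} := rfl
  have hginti : Integrable (fun x : EuclideanSpace ℝ (Fin N) => g N ε (x - p)) :=
    (integrable_g' hN hε).comp_sub_right p
  have step1 : ∫ x in s, g N ε (x - p)
      ≤ ∫ x in {x : EuclideanSpace ℝ (Fin N) | ρ ≤ ‖x - p‖}, g N ε (x - p) := by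
    apply setIntegral_mono_set hginti.integrableOn
    · filter_upwards with x; exact g_nonneg hN hε _
    · exact HasSubset.Subset.eventuallyLE hsub
  have step2 : ∫ x in {x : EuclideanSpace ℝ (Fin N) | ρ ≤ ‖x - p‖}, g N ε (x - p)
      = ∫ y in {y : EuclideanSpace ℝ (Fin N) | ρ ≤ ‖y‖}, g N ε y := by
    rw [← hTset]
    exact setIntegral_sub_translate (g N ε) p _ (measurableSet_tail ρ)
  have step3 : ∫ y in {y : EuclideanSpace ℝ (Fin N) | ρ ≤ ‖y‖}, g N ε y
      ≤ ∫ y in {y : EuclideanSpace ℝ (Fin N) | ρ ≤ ‖y‖}, FN N * ‖y‖ ^ (-(gam N * N)) := by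
    apply setIntegral_mono_on (integrable_g' hN hε).integrableOn
      (integrableOn_tail hN hρ) (measurableSet_tail ρ)
    intro y hy
    exact g_le_pow hN hε y (lt_of_lt_of_le hρ hy)
  linarith

lemma tail_nonneg (hN : 2 ≤ N) (ρ : ℝ) :
    0 ≤ ∫ y in {y : EuclideanSpace ℝ (Fin N) | ρ ≤ ‖y‖}, FN N * ‖y‖ ^ (-(gam N * N)) := by
  apply setIntegral_nonneg (measurableSet_tail ρ)
  intro y _
  exact mul_nonneg (FN_pos hN).le (rpow_nonneg (norm_nonneg y) _)

end BubbleAux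

namespace BubbleAux

lemma integrableOn_bdd {X : Type*} [MeasurableSpace X]
    {μ : Measure X} {s : Set X} (hs : MeasurableSet s) (hvol : μ s ≠ ⊤)
    {f : X → ℝ} (hf : AEStronglyMeasurable f (μ.restrict s)) {M : ℝ}
    (hM : ∀ x ∈ s, |f x| ≤ M) : IntegrableOn f s μ := by
  refine ⟨hf, ?_⟩
  apply MeasureTheory.HasFiniteIntegral.restrict_of_bounded (C := M) hvol.lt_top
  rw [ae_restrict_iff' hs]
  filter_upwards with x hx
  rw [Real.norm_eq_abs]
  exact hM x hx

lemma exp_mul_log_le {c s M : ℝ} (hc0 : 0 ≤ c) (hc1 : c ≤ 1) (hs : 0 < s) (hsM : s ≤ M) :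
    Real.exp (c * Real.log s) ≤ max 1 M := by
  rcases le_total s 1 with h | h
  · have h1 : Real.log s ≤ 0 := Real.log_nonpos hs.le h
    have : c * Real.log s ≤ 0 := mul_nonpos_of_nonneg_of_nonpos hc0 h1
    calc Real.exp (c * Real.log s) ≤ Real.exp 0 := Real.exp_le_exp.2 this
      _ = 1 := Real.exp_zero
      _ ≤ max 1 M := le_max_left _ _
  · have h1 : 0 ≤ Real.log s := Real.log_nonneg h
    have h2 : c * Real.log s ≤ Real.log s := by nlinarith
    calc Real.exp (c * Real.log s) ≤ Real.exp (Real.log s) := Real.exp_le_exp.2 h2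
      _ = s := Real.exp_log hs
      _ ≤ max 1 M := le_trans hsM (le_max_right _ _)

end BubbleAux

namespace BubbleAux

lemma abs_int {X : Type*} [MeasurableSpace X] (μ : Measure X) (f : X → ℝ) :
    |∫ x, f x ∂μ| ≤ ∫ x, |f x| ∂μ := by
  simpa [Real.norm_eq_abs] using norm_integral_le_integral_norm (μ := μ) f

lemma g_le_aux {N : ℕ} (hN : 2 ≤ N) {ε c : ℝ} (hc : 0 < c)
    (y : EuclideanSpace ℝ (Fin N)) (h : c ≤ ε ^ gam N + ‖y‖ ^ gam N) :
    g N ε y ≤ FN N * ((c ^ N)⁻¹) := by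
  rw [g, div_eq_mul_inv]
  apply mul_le_mul_of_nonneg_left _ (FN_pos hN).le
  apply inv_anti₀ (pow_pos hc _)
  exact pow_le_pow_left₀ hc.le h N

end BubbleAux

open BubbleAux

set_option maxHeartbeats 4000000 in
/-- Uniform closeness of the normalized bubble measure to its barycenter. -/
theorem bubble_measure_close_to_barycenter (N : ℕ) (hN : 2 ≤ N)
    (Ω : Set (EuclideanSpace ℝ (Fin N))) (hΩo : IsOpen Ω) (hΩb : Bornology.IsBounded Ω)
    (δ : ℝ) (hδ : 0 < δ)
    (χ : EuclideanSpace ℝ (Fin N) → ℝ) (hχsm : ContDiff ℝ (⊤ : ℕ∞) χ)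
    (hχc : HasCompactSupport χ) (hχΩ : tsupport χ ⊆ Ω)
    (hχ01 : ∀ x, 0 ≤ χ x ∧ χ x ≤ 1)
    (hχ1 : ∀ x ∈ Ω, δ / 2 < Metric.infDist x Ωᶜ → χ x = 1)
    (hK : ∃ x ∈ Ω, δ ≤ Metric.infDist x Ωᶜ)
    (C₀ : ℝ) (hC₀ : 1 ≤ C₀) (V : EuclideanSpace ℝ (Fin N) → ℝ)
    (hVlip : LipschitzWith (Real.toNNReal C₀) V)
    (hV : ∀ x ∈ closure Ω, 1 / C₀ ≤ V x ∧ V x ≤ C₀)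
    (m : ℕ) (hm : 1 ≤ m)
    :
    ∃ C : ℝ, 0 < C ∧ ∃ ε₀ : ℝ, 0 < ε₀ ∧
      ∀ ε : ℝ, 0 < ε → ε ≤ ε₀ →
      ∀ (p : Fin m → EuclideanSpace ℝ (Fin N)) (t : Fin m → ℝ),
        (∀ i, p i ∈ Ω ∧ δ ≤ Metric.infDist (p i) Ωᶜ) →
        (∀ i, 0 ≤ t i) → (∑ i, t i) = 1 →
        ∀ φ : EuclideanSpace ℝ (Fin N) → ℝ,
          LipschitzOnWith 1 φ (closure Ω) → (∀ x ∈ closure Ω, |φ x| ≤ 1) →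
          |(∫ x in Ω, φ x * (V x * Real.exp (testFun N m χ V p t ε x))) /
              (∫ x in Ω, V x * Real.exp (testFun N m χ V p t ε x)) -
            ∑ i, t i * φ (p i)| ≤ C * ε := by
  classical
  set γ : ℝ := gam N with hγdef
  have hγ1 : 1 < γ := one_lt_gam hN
  have hγ0 : 0 < γ := gam_pos hN
  have hC₀0 : (0:ℝ) < C₀ := lt_of_lt_of_le one_pos hC₀
  set A : ℝ := ∫ z : EuclideanSpace ℝ (Fin N), g N 1 z with hAdef
  have hA : 0 < A := intA_pos hN
  set Bm : ℝ := ∫ z : EuclideanSpace ℝ (Fin N), ‖z‖ * g N 1 z with hBmdef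
  have hBm : 0 ≤ Bm :=
    integral_nonneg fun z => mul_nonneg (norm_nonneg z) (g_nonneg hN one_pos z)
  set κ : ℝ := ∫ y in {y : EuclideanSpace ℝ (Fin N) | δ/2 ≤ ‖y‖},
      FN N * ‖y‖ ^ (-(γ * N)) with hκdef
  have hκ : 0 ≤ κ := tail_nonneg hN _
  have hδ2 : 0 < δ / 2 := by linarith
  have hΩmeas : MeasurableSet Ω := hΩo.measurableSet
  have hΩvol : volume Ω ≠ ⊤ := hΩb.measure_lt_top.ne
  set M' : ℝ := max 1 (FN N * C₀ * ((((δ/2) ^ γ) ^ N)⁻¹)) with hM'def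
  have hM1 : (1:ℝ) ≤ M' := le_max_left _ _
  set R₀ : ℝ := C₀ * M' * (volume Ω).toReal with hR₀def
  have hR₀ : 0 ≤ R₀ :=
    mul_nonneg (mul_nonneg hC₀0.le (by linarith)) ENNReal.toReal_nonneg
  set P : ℝ := 3 * C₀^2 * Bm + 2*κ + 2*R₀ + 1 with hPdef
  have hP : 0 < P := by nlinarith
  have hCpos : 0 < 2 * C₀^2 / A * P := mul_pos (div_pos (by positivity) hA) hP
  refine ⟨2 * C₀^2 / A * P, hCpos, min 1 (A / (2*(κ+1))), lt_min one_pos (by positivity), ?_⟩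
  intro ε hε hεle p t hpK ht0 ht1 φ hφlip hφbd
  have hε1 : ε ≤ 1 := le_trans hεle (min_le_left _ _)
  have hεA : ε ≤ A / (2*(κ+1)) := le_trans hεle (min_le_right _ _)
  have hpΩ : ∀ i, p i ∈ Ω := fun i => (hpK i).1
  have hpcl : ∀ i, p i ∈ closure Ω := fun i => subset_closure (hpΩ i)
  have hVp : ∀ i, 1/C₀ ≤ V (p i) ∧ V (p i) ≤ C₀ := fun i => hV _ (hpcl i)
  have hVppos : ∀ i, 0 < V (p i) := fun i => lt_of_lt_of_le (by positivity) (hVp i).1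
  have hVpinv : ∀ i, (V (p i))⁻¹ ≤ C₀ := by
    intro i
    have h := inv_anti₀ (by positivity : (0:ℝ) < 1/C₀) (hVp i).1
    rwa [one_div, inv_inv] at h
  have hVpinv0 : ∀ i, 0 < (V (p i))⁻¹ := fun i => inv_pos.2 (hVppos i)
  have hVpinvlow : ∀ i, C₀⁻¹ ≤ (V (p i))⁻¹ := fun i =>
    inv_anti₀ (hVppos i) (hVp i).2
  -- the profile S and its exponential T
  set S : EuclideanSpace ℝ (Fin N) → ℝ :=
    fun x => ∑ i, t i * ((V (p i))⁻¹ * g N ε (x - p i)) with hSdef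
  have hterm_nonneg : ∀ (i) (x : EuclideanSpace ℝ (Fin N)),
      0 ≤ t i * ((V (p i))⁻¹ * g N ε (x - p i)) := fun i x =>
    mul_nonneg (ht0 i) (mul_nonneg (hVpinv0 i).le (g_nonneg hN hε _))
  have hexist : ∃ i, 0 < t i := by
    by_contra h
    push_neg at h
    have : ∑ i, t i = 0 := Finset.sum_eq_zero fun i _ => le_antisymm (h i) (ht0 i)
    rw [ht1] at this
    norm_num at this
  have hSpos : ∀ x, 0 < S x := by
    intro x
    obtain ⟨i₀, hi₀⟩ := hexist
    apply Finset.sum_pos' (fun i _ => hterm_nonneg i x)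
    exact ⟨i₀, Finset.mem_univ _, mul_pos hi₀ (mul_pos (hVpinv0 i₀) (g_pos hN hε _))⟩
  have hScont : Continuous S := by
    apply continuous_finset_sum
    intro i _
    exact continuous_const.mul (continuous_const.mul
      ((continuous_g hN hε).comp (continuous_id.sub continuous_const)))
  set T : EuclideanSpace ℝ (Fin N) → ℝ :=
    fun x => Real.exp (χ x * Real.log (S x)) with hTdef
  have hTpos : ∀ x, 0 < T x := fun x => Real.exp_pos _
  have hTcont : Continuous T :=
    Real.continuous_exp.comp (hχsm.continuous.mul
      (hScont.log fun x => (hSpos x).ne'))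
  have hTeq : ∀ x, Real.exp (testFun N m χ V p t ε x) = T x := by
    intro x
    have hsum : (∑ i, t i * (FN N /
        ((ε ^ ((N:ℝ)/((N:ℝ)-1)) + ‖x - p i‖ ^ ((N:ℝ)/((N:ℝ)-1))) ^ N * V (p i)))) = S x := by
      simp only [hSdef]
      apply Finset.sum_congr rfl
      intro i _
      simp only [BubbleAux.g, hγdef, BubbleAux.gam]
      rw [inv_mul_eq_div, div_div]
    simp only [testFun, hTdef, hsum]
  -- the core region E
  set E : Set (EuclideanSpace ℝ (Fin N)) := Ω ∩ χ ⁻¹' {1} with hEdef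
  have hEmeas : MeasurableSet E :=
    hΩmeas.inter (hχsm.continuous.measurable (measurableSet_singleton 1))
  have hEsub : E ⊆ Ω := inter_subset_left
  have hΩcl : Ω ⊆ closure Ω := subset_closure
  have hEcl : E ⊆ closure Ω := hEsub.trans hΩcl
  have hEvol : volume E ≠ ⊤ := (lt_of_le_of_lt (measure_mono hEsub) hΩvol.lt_top).ne
  have hball : ∀ i, Metric.ball (p i) (δ/2) ⊆ E := by
    intro i x hx
    have hdist : dist (p i) x < δ/2 := by
      rw [dist_comm]; exact mem_ball.mp hx
    have h1 : Metric.infDist (p i) Ωᶜ ≤ Metric.infDist x Ωᶜ + dist (p i) x :=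
      Metric.infDist_le_infDist_add_dist
    have h2 : δ/2 < Metric.infDist x Ωᶜ := by have := (hpK i).2; linarith
    have hxΩ : x ∈ Ω := by
      by_contra hmem
      have h0 : Metric.infDist x Ωᶜ = 0 := Metric.infDist_zero_of_mem hmem
      rw [h0] at h2; linarith
    exact ⟨hxΩ, by simpa using hχ1 x hxΩ h2⟩
  have hfar : ∀ x ∈ Ω \ E, ∀ i, δ/2 ≤ ‖x - p i‖ := by
    intro x hx i
    have hxΩ : x ∈ Ω := hx.1
    have hχx : χ x ≠ 1 := by
      intro h; exact hx.2 ⟨hxΩ, by simpa using h⟩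
    have h1 : Metric.infDist x Ωᶜ ≤ δ/2 := by
      by_contra h; push_neg at h; exact hχx (hχ1 x hxΩ h)
    have h2 : Metric.infDist (p i) Ωᶜ ≤ Metric.infDist x Ωᶜ + dist (p i) x :=
      Metric.infDist_le_infDist_add_dist
    have h3 := (hpK i).2
    have h4 : δ/2 ≤ dist (p i) x := by linarith
    rwa [dist_comm, dist_eq_norm] at h4
  -- global integrals of bubbles
  have hgint : ∀ i, Integrable (fun x : EuclideanSpace ℝ (Fin N) => g N ε (x - p i)) :=
    fun i => (integrable_g' hN hε).comp_sub_right (p i)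
  have hmomint : ∀ i, Integrable
      (fun x : EuclideanSpace ℝ (Fin N) => ‖x - p i‖ * g N ε (x - p i)) := by
    intro i
    have h2 : Integrable (fun y : EuclideanSpace ℝ (Fin N) => ‖y‖ * g N ε y) := by
      have h := integrable_g hN 1 le_rfl hε
      simpa using h
    exact h2.comp_sub_right (p i)
  have hgtot : ∀ i, (∫ x : EuclideanSpace ℝ (Fin N), g N ε (x - p i)) = A * ε ^ (-γ) := by
    intro i
    rw [integral_sub_right_eq_self (fun y => g N ε y) (p i)]
    have h0 := integral_g_scale hN 0 hε
    simp only [pow_zero, one_mul, Nat.cast_zero, zero_sub] at h0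
    rw [h0, ← hγdef, ← hAdef, mul_comm]
  have hmomtot : ∀ i, (∫ x : EuclideanSpace ℝ (Fin N), ‖x - p i‖ * g N ε (x - p i))
      = Bm * ε ^ (1-γ) := by
    intro i
    rw [integral_sub_right_eq_self (fun y => ‖y‖ * g N ε y) (p i)]
    have h0 := integral_g_scale hN 1 hε
    simp only [pow_one, Nat.cast_one] at h0
    rw [h0, ← hγdef, ← hBmdef, mul_comm]
  have hcompl_sub : ∀ i, Eᶜ ⊆ {x : EuclideanSpace ℝ (Fin N) | δ/2 ≤ ‖x - p i‖} := by
    intro i x hx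
    simp only [mem_setOf_eq]
    by_contra h
    push_neg at h
    exact hx (hball i (by rw [mem_ball, dist_eq_norm]; exact h))
  have hgE_up : ∀ i, (∫ x in E, g N ε (x - p i)) ≤ A * ε ^ (-γ) := by
    intro i
    rw [← hgtot i]
    exact setIntegral_le_integral (hgint i)
      (Filter.Eventually.of_forall fun x => g_nonneg hN hε _)
  have hgE_low : ∀ i, A * ε ^ (-γ) - κ ≤ ∫ x in E, g N ε (x - p i) := by
    intro i
    have hsplit := integral_add_compl hEmeas (hgint i)
    have htail : (∫ x in Eᶜ, g N ε (x - p i)) ≤ κ := by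
      rw [hκdef, hγdef]
      exact tail_bound hN hδ2 hε (p i) hEmeas.compl (hcompl_sub i)
    have h := hgtot i
    linarith [hsplit.symm ▸ h]
  have hmomE : ∀ i, (∫ x in E, ‖x - p i‖ * g N ε (x - p i)) ≤ Bm * ε ^ (1-γ) := by
    intro i
    rw [← hmomtot i]
    exact setIntegral_le_integral (hmomint i)
      (Filter.Eventually.of_forall fun x =>
        mul_nonneg (norm_nonneg _) (g_nonneg hN hε _))
  -- bounds and integrability on E
  set gmax : ℝ := FN N * (((ε ^ γ) ^ N)⁻¹) with hgmaxdef
  have hεγpos : (0:ℝ) < ε ^ γ := Real.rpow_pos_of_pos hε _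
  have hgmax0 : 0 ≤ gmax := mul_nonneg (FN_pos hN).le (by positivity)
  have hgle : ∀ (x : EuclideanSpace ℝ (Fin N)) i, g N ε (x - p i) ≤ gmax := by
    intro x i
    rw [hgmaxdef, hγdef]
    apply g_le_aux hN (Real.rpow_pos_of_pos hε _)
    exact le_add_of_nonneg_right (Real.rpow_nonneg (norm_nonneg _) _)
  have hVbd : ∀ x ∈ closure Ω, |V x| ≤ C₀ := by
    intro x hx
    have h1 := (hV x hx).1
    have h2 := (hV x hx).2
    have h3 : (0:ℝ) < 1/C₀ := by positivity
    exact abs_le.2 ⟨by linarith, h2⟩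
  have hVcont : Continuous V := hVlip.continuous
  have hφcont : ContinuousOn φ (closure Ω) := hφlip.continuousOn
  have hgcont : ∀ i, Continuous (fun x : EuclideanSpace ℝ (Fin N) => g N ε (x - p i)) :=
    fun i => (continuous_g hN hε).comp (continuous_id.sub continuous_const)
  have hIint : ∀ i, IntegrableOn
      (fun x => (V (p i))⁻¹ * (V x * g N ε (x - p i))) E := by
    intro i
    apply integrableOn_bdd hEmeas hEvol (M := C₀ * (C₀ * gmax))
    · exact (continuous_const.mul (hVcont.mul (hgcont i))).aestronglyMeasurable.restrict
    · intro x hx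
      rw [abs_mul, abs_mul]
      have hg0 := g_nonneg hN hε (x - p i)
      have h1 : |(V (p i))⁻¹| ≤ C₀ := by
        rw [abs_of_pos (hVpinv0 i)]; exact hVpinv i
      have h2 : |V x| ≤ C₀ := hVbd x (hEcl hx)
      have h3 : |g N ε (x - p i)| ≤ gmax := by
        rw [abs_of_nonneg hg0]; exact hgle x i
      have := mul_le_mul h2 h3 (abs_nonneg _) hC₀0.le
      exact mul_le_mul h1 this (mul_nonneg (abs_nonneg _) (abs_nonneg _)) hC₀0.le
  have hJint : ∀ i, IntegrableOn
      (fun x => φ x * ((V (p i))⁻¹ * (V x * g N ε (x - p i)))) E := by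
    intro i
    apply integrableOn_bdd hEmeas hEvol (M := 1 * (C₀ * (C₀ * gmax)))
    · exact ((hφcont.mono hEcl).aestronglyMeasurable hEmeas).mul
        (continuous_const.mul (hVcont.mul (hgcont i))).aestronglyMeasurable.restrict
    · intro x hx
      rw [abs_mul]
      apply mul_le_mul (hφbd x (hEcl hx)) _ (abs_nonneg _) zero_le_one
      rw [abs_mul, abs_mul]
      have hg0 := g_nonneg hN hε (x - p i)
      have h1 : |(V (p i))⁻¹| ≤ C₀ := by
        rw [abs_of_pos (hVpinv0 i)]; exact hVpinv i
      have h2 : |V x| ≤ C₀ := hVbd x (hEcl hx)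
      have h3 : |g N ε (x - p i)| ≤ gmax := by
        rw [abs_of_nonneg hg0]; exact hgle x i
      have := mul_le_mul h2 h3 (abs_nonneg _) hC₀0.le
      exact mul_le_mul h1 this (mul_nonneg (abs_nonneg _) (abs_nonneg _)) hC₀0.le
  set Ii : Fin m → ℝ :=
    fun i => ∫ x in E, (V (p i))⁻¹ * (V x * g N ε (x - p i)) with hIidef
  set Ji : Fin m → ℝ :=
    fun i => ∫ x in E, φ x * ((V (p i))⁻¹ * (V x * g N ε (x - p i))) with hJidef
  have hVlipd : ∀ (x : EuclideanSpace ℝ (Fin N)) i, |V x - V (p i)| ≤ C₀ * ‖x - p i‖ := by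
    intro x i
    have h := hVlip.dist_le_mul x (p i)
    rwa [Real.dist_eq, dist_eq_norm, Real.coe_toNNReal _ (le_trans zero_le_one hC₀)] at h
  have hφlipd : ∀ x ∈ closure Ω, ∀ i, |φ x - φ (p i)| ≤ ‖x - p i‖ := by
    intro x hx i
    have h := hφlip.dist_le_mul x hx (p i) (hpcl i)
    rwa [Real.dist_eq, dist_eq_norm, NNReal.coe_one, one_mul] at h
  -- V-error
  have hIerr : ∀ i, |Ii i - ∫ x in E, g N ε (x - p i)| ≤ C₀^2 * (Bm * ε^(1-γ)) := by
    intro i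
    have hdint : IntegrableOn
        (fun x => ((V (p i))⁻¹ * V x - 1) * g N ε (x - p i)) E := by
      apply IntegrableOn.congr_fun ((hIint i).sub (hgint i).integrableOn) _ hEmeas
      intro x _; simp only [Pi.sub_apply]; ring
    have hdiff : Ii i - (∫ x in E, g N ε (x - p i))
        = ∫ x in E, ((V (p i))⁻¹ * V x - 1) * g N ε (x - p i) := by
      rw [hIidef, ← integral_sub (hIint i) (hgint i).integrableOn]
      apply setIntegral_congr_fun hEmeas
      intro x _; ring
    rw [hdiff]
    calc |∫ x in E, ((V (p i))⁻¹ * V x - 1) * g N ε (x - p i)|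
        ≤ ∫ x in E, |((V (p i))⁻¹ * V x - 1) * g N ε (x - p i)| := abs_int _ _
      _ ≤ ∫ x in E, C₀^2 * (‖x - p i‖ * g N ε (x - p i)) := by
          apply setIntegral_mono_on hdint.abs
            ((hmomint i).integrableOn.const_mul _) hEmeas
          intro x hx
          rw [abs_mul, abs_of_nonneg (g_nonneg hN hε _)]
          have h1 : |(V (p i))⁻¹ * V x - 1| ≤ C₀^2 * ‖x - p i‖ := by
            have heq : (V (p i))⁻¹ * V x - 1 = (V x - V (p i)) * (V (p i))⁻¹ := by
              rw [sub_mul, mul_inv_cancel₀ (hVppos i).ne', mul_comm]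
            rw [heq, abs_mul, abs_of_pos (hVpinv0 i)]
            calc |V x - V (p i)| * (V (p i))⁻¹
                ≤ (C₀ * ‖x - p i‖) * C₀ :=
                  mul_le_mul (hVlipd x i) (hVpinv i) (hVpinv0 i).le
                    (by positivity)
              _ = C₀^2 * ‖x - p i‖ := by ring
          calc |(V (p i))⁻¹ * V x - 1| * g N ε (x - p i)
              ≤ (C₀^2 * ‖x - p i‖) * g N ε (x - p i) :=
                mul_le_mul_of_nonneg_right h1 (g_nonneg hN hε _)
            _ = C₀^2 * (‖x - p i‖ * g N ε (x - p i)) := by ring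
      _ = C₀^2 * ∫ x in E, ‖x - p i‖ * g N ε (x - p i) := integral_const_mul _ _
      _ ≤ C₀^2 * (Bm * ε^(1-γ)) :=
          mul_le_mul_of_nonneg_left (hmomE i) (by positivity)
  have hJerr : ∀ i, |Ji i - φ (p i) * Ii i| ≤ C₀^2 * (Bm * ε^(1-γ)) := by
    intro i
    have hconst : φ (p i) * Ii i
        = ∫ x in E, φ (p i) * ((V (p i))⁻¹ * (V x * g N ε (x - p i))) := by
      rw [hIidef, integral_const_mul]
    have hdint : IntegrableOn
        (fun x => (φ x - φ (p i)) * ((V (p i))⁻¹ * (V x * g N ε (x - p i)))) E := by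
      apply IntegrableOn.congr_fun ((hJint i).sub ((hIint i).const_mul (φ (p i)))) _ hEmeas
      intro x _; simp only [Pi.sub_apply]; ring
    have hdiff : Ji i - φ (p i) * Ii i
        = ∫ x in E, (φ x - φ (p i)) * ((V (p i))⁻¹ * (V x * g N ε (x - p i))) := by
      rw [hJidef, hconst, ← integral_sub (hJint i) ((hIint i).const_mul (φ (p i)))]
      apply setIntegral_congr_fun hEmeas
      intro x _; ring
    rw [hdiff]
    calc |∫ x in E, (φ x - φ (p i)) * ((V (p i))⁻¹ * (V x * g N ε (x - p i)))|
        ≤ ∫ x in E, |(φ x - φ (p i)) * ((V (p i))⁻¹ * (V x * g N ε (x - p i)))| := abs_int _ _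
      _ ≤ ∫ x in E, C₀^2 * (‖x - p i‖ * g N ε (x - p i)) := by
          apply setIntegral_mono_on hdint.abs
            ((hmomint i).integrableOn.const_mul _) hEmeas
          intro x hx
          rw [abs_mul, abs_mul, abs_mul]
          have hg0 := g_nonneg hN hε (x - p i)
          have h1 : |φ x - φ (p i)| ≤ ‖x - p i‖ := hφlipd x (hEcl hx) i
          have h2 : |(V (p i))⁻¹| * (|V x| * |g N ε (x - p i)|) ≤ C₀^2 * g N ε (x - p i) := by
            rw [abs_of_pos (hVpinv0 i), abs_of_nonneg hg0]
            have h3 : |V x| * g N ε (x - p i) ≤ C₀ * g N ε (x - p i) :=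
              mul_le_mul_of_nonneg_right (hVbd x (hEcl hx)) hg0
            calc (V (p i))⁻¹ * (|V x| * g N ε (x - p i))
                ≤ C₀ * (C₀ * g N ε (x - p i)) := by
                  apply mul_le_mul (hVpinv i) _ (by positivity) hC₀0.le
                  exact h3
              _ = C₀^2 * g N ε (x - p i) := by ring
          calc |φ x - φ (p i)| * (|(V (p i))⁻¹| * (|V x| * |g N ε (x - p i)|))
              ≤ ‖x - p i‖ * (C₀^2 * g N ε (x - p i)) := by
                apply mul_le_mul h1 h2 _ (norm_nonneg _)
                positivity
            _ = C₀^2 * (‖x - p i‖ * g N ε (x - p i)) := by ring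
      _ = C₀^2 * ∫ x in E, ‖x - p i‖ * g N ε (x - p i) := integral_const_mul _ _
      _ ≤ C₀^2 * (Bm * ε^(1-γ)) :=
          mul_le_mul_of_nonneg_left (hmomE i) (by positivity)
  -- closeness of Ii to the common value X
  set X : ℝ := A * ε ^ (-γ) with hXdef
  set e₁ : ℝ := C₀^2 * (Bm * ε^(1-γ)) with he₁def
  have he₁0 : 0 ≤ e₁ := by
    rw [he₁def]
    have : (0:ℝ) ≤ ε^(1-γ) := (Real.rpow_pos_of_pos hε _).le
    positivity
  have hIclose : ∀ i, |Ii i - X| ≤ e₁ + κ := by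
    intro i
    have h1 := hIerr i
    have h2 : |(∫ x in E, g N ε (x - p i)) - X| ≤ κ := by
      rw [abs_le]
      exact ⟨by linarith [hgE_low i], by linarith [hgE_up i]⟩
    calc |Ii i - X| ≤ |Ii i - ∫ x in E, g N ε (x - p i)|
          + |(∫ x in E, g N ε (x - p i)) - X| := by
          have := abs_sub_le (Ii i) (∫ x in E, g N ε (x - p i)) X
          linarith
      _ ≤ e₁ + κ := by rw [he₁def]; linarith
  -- lower bound for Ii
  have hκε : κ ≤ A/2 * ε^(-γ) := by
    have hd : (0:ℝ) < 2*(κ+1) := by linarith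
    have h1 : κ * ε ≤ A/2 := by
      have h2 : κ * ε ≤ κ * (A / (2*(κ+1))) :=
        mul_le_mul_of_nonneg_left hεA hκ
      have h3 : κ * (A / (2*(κ+1))) ≤ A/2 := by
        have heq : κ * (A / (2*(κ+1))) = A * (κ / (2*(κ+1))) := by ring
        rw [heq]
        have h4 : κ / (2*(κ+1)) ≤ 1/2 := by
          rw [div_le_div_iff₀ hd (by norm_num : (0:ℝ) < 2)]
          linarith
        calc A * (κ/(2*(κ+1))) ≤ A * (1/2) := mul_le_mul_of_nonneg_left h4 hA.le
          _ = A/2 := by ring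
      linarith
    have h4 : ε^(-(1:ℝ)) ≤ ε^(-γ) :=
      Real.rpow_le_rpow_of_exponent_ge hε hε1 (by linarith)
    have h5 : κ ≤ A/2 * ε^(-(1:ℝ)) := by
      rw [Real.rpow_neg_one, ← div_eq_mul_inv]
      exact (le_div_iff₀ hε).2 h1
    calc κ ≤ A/2 * ε^(-(1:ℝ)) := h5
      _ ≤ A/2 * ε^(-γ) := mul_le_mul_of_nonneg_left h4 (by linarith)
  have hIlow : ∀ i, A/(2*C₀^2) * ε^(-γ) ≤ Ii i := by
    intro i
    have hX2 : X = 2*(A/2 * ε^(-γ)) := by rw [hXdef]; ring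
    have hgElow2 : A/2 * ε^(-γ) ≤ ∫ x in E, g N ε (x - p i) := by
      linarith [hgE_low i, hκε, hX2]
    have hpoint : ∀ x ∈ E, (C₀^2)⁻¹ * g N ε (x - p i)
        ≤ (V (p i))⁻¹ * (V x * g N ε (x - p i)) := by
      intro x hx
      have hg0 := g_nonneg hN hε (x - p i)
      have h1 : (C₀:ℝ)⁻¹ ≤ (V (p i))⁻¹ := hVpinvlow i
      have h2 : (C₀:ℝ)⁻¹ ≤ V x := by
        have := (hV x (hEcl hx)).1
        rwa [one_div] at this
      have h3 : (C₀^2:ℝ)⁻¹ * g N ε (x - p i) = (C₀⁻¹) * ((C₀⁻¹) * g N ε (x - p i)) := by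
        rw [← mul_assoc, ← mul_inv]
        ring_nf
      rw [h3]
      apply mul_le_mul h1 _ (by positivity) (hVpinv0 i).le
      exact mul_le_mul_of_nonneg_right h2 hg0
    have hstep : (C₀^2)⁻¹ * (∫ x in E, g N ε (x - p i)) ≤ Ii i := by
      rw [hIidef, ← integral_const_mul]
      exact setIntegral_mono_on
        ((hgint i).integrableOn.const_mul _) (hIint i) hEmeas hpoint
    calc A/(2*C₀^2) * ε^(-γ) = (C₀^2)⁻¹ * (A/2 * ε^(-γ)) := by ring
      _ ≤ (C₀^2)⁻¹ * (∫ x in E, g N ε (x - p i)) :=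
          mul_le_mul_of_nonneg_left hgElow2 (by positivity)
      _ ≤ Ii i := hstep
  -- identification of the integral over E
  have hTsum : ∀ x ∈ E, V x * T x
      = ∑ i, t i * ((V (p i))⁻¹ * (V x * g N ε (x - p i))) := by
    intro x hx
    have hχx : χ x = 1 := by
      have := hx.2
      simpa using this
    have hTx : T x = S x := by
      simp only [hTdef, hχx, one_mul]
      exact Real.exp_log (hSpos x)
    rw [hTx]
    simp only [hSdef]
    rw [Finset.mul_sum]
    apply Finset.sum_congr rfl
    intro i _
    ring
  have hφTsum : ∀ x ∈ E, φ x * (V x * T x)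
      = ∑ i, t i * (φ x * ((V (p i))⁻¹ * (V x * g N ε (x - p i)))) := by
    intro x hx
    rw [hTsum x hx, Finset.mul_sum]
    apply Finset.sum_congr rfl
    intro i _
    ring
  have hDE : (∫ x in E, V x * T x) = ∑ i, t i * Ii i := by
    rw [setIntegral_congr_fun hEmeas hTsum]
    rw [integral_finset_sum _ (fun i _ => ((hIint i).const_mul (t i)))]
    apply Finset.sum_congr rfl
    intro i _
    rw [integral_const_mul, hIidef]
  have hNE : (∫ x in E, φ x * (V x * T x)) = ∑ i, t i * Ji i := by
    rw [setIntegral_congr_fun hEmeas hφTsum]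
    rw [integral_finset_sum _ (fun i _ => ((hJint i).const_mul (t i)))]
    apply Finset.sum_congr rfl
    intro i _
    rw [integral_const_mul, hJidef]
  -- global bounds for T
  have hSle : ∀ x, S x ≤ C₀ * gmax := by
    intro x
    have hterm : ∀ i ∈ Finset.univ, t i * ((V (p i))⁻¹ * g N ε (x - p i))
        ≤ t i * (C₀ * gmax) := by
      intro i _
      apply mul_le_mul_of_nonneg_left _ (ht0 i)
      exact mul_le_mul (hVpinv i) (hgle x i) (g_nonneg hN hε _) hC₀0.le
    calc S x ≤ ∑ i, t i * (C₀ * gmax) := Finset.sum_le_sum hterm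
      _ = C₀ * gmax := by rw [← Finset.sum_mul, ht1, one_mul]
  have hTleΩ : ∀ x, T x ≤ max 1 (C₀ * gmax) := fun x =>
    exp_mul_log_le (hχ01 x).1 (hχ01 x).2 (hSpos x) (hSle x)
  have hmax0 : (0:ℝ) ≤ max 1 (C₀ * gmax) := le_trans zero_le_one (le_max_left _ _)
  have hVT_int : IntegrableOn (fun x => V x * T x) Ω := by
    apply integrableOn_bdd hΩmeas hΩvol (M := C₀ * max 1 (C₀ * gmax))
    · exact (hVcont.mul hTcont).aestronglyMeasurable.restrict
    · intro x hx
      rw [abs_mul, abs_of_pos (hTpos x)]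
      exact mul_le_mul (hVbd x (hΩcl hx)) (hTleΩ x) (hTpos x).le hC₀0.le
  have hφVT_int : IntegrableOn (fun x => φ x * (V x * T x)) Ω := by
    apply integrableOn_bdd hΩmeas hΩvol (M := 1 * (C₀ * max 1 (C₀ * gmax)))
    · exact ((hφcont.mono hΩcl).aestronglyMeasurable hΩmeas).mul
        (hVcont.mul hTcont).aestronglyMeasurable.restrict
    · intro x hx
      rw [abs_mul]
      apply mul_le_mul (hφbd x (hΩcl hx)) _ (abs_nonneg _) zero_le_one
      rw [abs_mul, abs_of_pos (hTpos x)]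
      exact mul_le_mul (hVbd x (hΩcl hx)) (hTleΩ x) (hTpos x).le hC₀0.le
  -- boundary region
  set BdD : ℝ := ∫ x in Ω \ E, V x * T x with hBdDdef
  set BdN : ℝ := ∫ x in Ω \ E, φ x * (V x * T x) with hBdNdef
  have hΩEmeas : MeasurableSet (Ω \ E) := hΩmeas.diff hEmeas
  have hΩEcl : Ω \ E ⊆ closure Ω := (diff_subset).trans hΩcl
  have hVT0 : ∀ x ∈ closure Ω, 0 ≤ V x * T x := by
    intro x hx
    have h1 := (hV x hx).1
    have h2 : (0:ℝ) < 1/C₀ := by positivity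
    exact mul_nonneg (by linarith) (hTpos x).le
  have hBdD0 : 0 ≤ BdD :=
    setIntegral_nonneg hΩEmeas fun x hx => hVT0 x (hΩEcl hx)
  -- bound for T on the boundary region
  have hTbd : ∀ x ∈ Ω \ E, V x * T x ≤ C₀ * M' := by
    intro x hx
    have hSbd : S x ≤ FN N * C₀ * ((((δ/2) ^ γ) ^ N)⁻¹) := by
      have hterm : ∀ i ∈ Finset.univ, t i * ((V (p i))⁻¹ * g N ε (x - p i))
          ≤ t i * (FN N * C₀ * ((((δ/2) ^ γ) ^ N)⁻¹)) := by
        intro i _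
        apply mul_le_mul_of_nonneg_left _ (ht0 i)
        have hg2 : g N ε (x - p i) ≤ FN N * ((((δ/2) ^ γ) ^ N)⁻¹) := by
          rw [hγdef]
          apply g_le_aux hN (Real.rpow_pos_of_pos hδ2 _)
          calc (δ/2) ^ gam N ≤ ‖x - p i‖ ^ gam N :=
                Real.rpow_le_rpow hδ2.le (hfar x hx i) (gam_pos hN).le
            _ ≤ ε ^ gam N + ‖x - p i‖ ^ gam N :=
                le_add_of_nonneg_left (Real.rpow_pos_of_pos hε _).le
        calc (V (p i))⁻¹ * g N ε (x - p i)
            ≤ C₀ * (FN N * ((((δ/2) ^ γ) ^ N)⁻¹)) :=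
              mul_le_mul (hVpinv i) hg2 (g_nonneg hN hε _) hC₀0.le
          _ = FN N * C₀ * ((((δ/2) ^ γ) ^ N)⁻¹) := by ring
      calc S x ≤ ∑ i, t i * (FN N * C₀ * ((((δ/2) ^ γ) ^ N)⁻¹)) :=
            Finset.sum_le_sum hterm
        _ = FN N * C₀ * ((((δ/2) ^ γ) ^ N)⁻¹) := by rw [← Finset.sum_mul, ht1, one_mul]
    have hTb : T x ≤ M' := by
      rw [hM'def]
      exact exp_mul_log_le (hχ01 x).1 (hχ01 x).2 (hSpos x) hSbd
    have hVx : |V x| ≤ C₀ := hVbd x (hΩEcl hx)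
    calc V x * T x ≤ |V x| * T x :=
          mul_le_mul_of_nonneg_right (le_abs_self _) (hTpos x).le
      _ ≤ C₀ * M' := mul_le_mul hVx hTb (hTpos x).le hC₀0.le
  have hBdDle : BdD ≤ R₀ := by
    have h1 : BdD ≤ ∫ _x in Ω \ E, (C₀ * M' : ℝ) := by
      rw [hBdDdef]
      apply setIntegral_mono_on (hVT_int.mono_set diff_subset)
        (integrableOn_const
          (lt_of_le_of_lt (measure_mono diff_subset) hΩvol.lt_top).ne) hΩEmeas
      exact hTbd
    rw [setIntegral_const, smul_eq_mul] at h1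
    have h2 : (volume (Ω \ E)).toReal ≤ (volume Ω).toReal :=
      ENNReal.toReal_mono hΩvol (measure_mono diff_subset)
    calc BdD ≤ (volume (Ω \ E)).toReal * (C₀ * M') := h1
      _ ≤ (volume Ω).toReal * (C₀ * M') := by
          apply mul_le_mul_of_nonneg_right h2
          exact mul_nonneg hC₀0.le (by linarith)
      _ = R₀ := by rw [hR₀def]; ring
  have hBdNle : |BdN| ≤ R₀ := by
    have h1 : |BdN| ≤ ∫ x in Ω \ E, |φ x * (V x * T x)| := abs_int _ _
    have h2 : (∫ x in Ω \ E, |φ x * (V x * T x)|) ≤ ∫ x in Ω \ E, V x * T x := by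
      apply setIntegral_mono_on (hφVT_int.mono_set diff_subset).abs
        (hVT_int.mono_set diff_subset) hΩEmeas
      intro x hx
      rw [abs_mul]
      calc |φ x| * |V x * T x| ≤ 1 * |V x * T x| :=
            mul_le_mul_of_nonneg_right (hφbd x (hΩEcl hx)) (abs_nonneg _)
        _ = V x * T x := by rw [one_mul, abs_of_nonneg (hVT0 x (hΩEcl hx))]
    calc |BdN| ≤ ∫ x in Ω \ E, V x * T x := le_trans h1 h2
      _ ≤ R₀ := hBdDle
  -- rewrite the goal integrals
  have hNum0 : (∫ x in Ω, φ x * (V x * Real.exp (testFun N m χ V p t ε x)))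
      = (∑ i, t i * Ji i) + BdN := by
    have h1 : (∫ x in Ω, φ x * (V x * Real.exp (testFun N m χ V p t ε x)))
        = ∫ x in Ω, φ x * (V x * T x) :=
      setIntegral_congr_fun hΩmeas fun x _ => by rw [hTeq x]
    have hsplit : E ∪ (Ω \ E) = Ω := Set.union_diff_cancel hEsub
    rw [h1, ← hsplit, setIntegral_union disjoint_sdiff_self_right hΩEmeas
      (hφVT_int.mono_set hEsub) (hφVT_int.mono_set diff_subset), hNE, ← hBdNdef]
  have hDen0 : (∫ x in Ω, V x * Real.exp (testFun N m χ V p t ε x))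
      = (∑ i, t i * Ii i) + BdD := by
    have h1 : (∫ x in Ω, V x * Real.exp (testFun N m χ V p t ε x))
        = ∫ x in Ω, V x * T x :=
      setIntegral_congr_fun hΩmeas fun x _ => by rw [hTeq x]
    have hsplit : E ∪ (Ω \ E) = Ω := Set.union_diff_cancel hEsub
    rw [h1, ← hsplit, setIntegral_union disjoint_sdiff_self_right hΩEmeas
      (hVT_int.mono_set hEsub) (hVT_int.mono_set diff_subset), hDE, ← hBdDdef]
  rw [hNum0, hDen0]
  set B : ℝ := ∑ i, t i * φ (p i) with hBdef
  set Num : ℝ := (∑ i, t i * Ji i) + BdN with hNumdef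
  set Den : ℝ := (∑ i, t i * Ii i) + BdD with hDendef
  have hφabs : ∀ i, |φ (p i)| ≤ 1 := fun i => hφbd _ (hpcl i)
  have hBabs : |B| ≤ 1 := by
    calc |B| ≤ ∑ i, |t i * φ (p i)| := Finset.abs_sum_le_sum_abs _ _
      _ ≤ ∑ i, t i := by
          apply Finset.sum_le_sum
          intro i _
          rw [abs_mul, abs_of_nonneg (ht0 i)]
          exact mul_le_of_le_one_right (ht0 i) (hφabs i)
      _ = 1 := ht1
  have hsum1 : |∑ i, t i * (Ji i - φ (p i) * Ii i)| ≤ e₁ := by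
    calc |∑ i, t i * (Ji i - φ (p i) * Ii i)|
        ≤ ∑ i, |t i * (Ji i - φ (p i) * Ii i)| := Finset.abs_sum_le_sum_abs _ _
      _ ≤ ∑ i, t i * e₁ := by
          apply Finset.sum_le_sum
          intro i _
          rw [abs_mul, abs_of_nonneg (ht0 i)]
          exact mul_le_mul_of_nonneg_left (hJerr i) (ht0 i)
      _ = e₁ := by rw [← Finset.sum_mul, ht1, one_mul]
  have hsum2 : |∑ i, t i * φ (p i) * (Ii i - X)| ≤ e₁ + κ := by
    calc |∑ i, t i * φ (p i) * (Ii i - X)|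
        ≤ ∑ i, |t i * φ (p i) * (Ii i - X)| := Finset.abs_sum_le_sum_abs _ _
      _ ≤ ∑ i, t i * (e₁ + κ) := by
          apply Finset.sum_le_sum
          intro i _
          rw [abs_mul, abs_mul, abs_of_nonneg (ht0 i), mul_assoc]
          apply mul_le_mul_of_nonneg_left _ (ht0 i)
          calc |φ (p i)| * |Ii i - X| ≤ 1 * (e₁ + κ) :=
                mul_le_mul (hφabs i) (hIclose i) (abs_nonneg _) zero_le_one
            _ = e₁ + κ := one_mul _
      _ = e₁ + κ := by rw [← Finset.sum_mul, ht1, one_mul]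
  have hsum3 : |∑ i, t i * (Ii i - X)| ≤ e₁ + κ := by
    calc |∑ i, t i * (Ii i - X)|
        ≤ ∑ i, |t i * (Ii i - X)| := Finset.abs_sum_le_sum_abs _ _
      _ ≤ ∑ i, t i * (e₁ + κ) := by
          apply Finset.sum_le_sum
          intro i _
          rw [abs_mul, abs_of_nonneg (ht0 i)]
          exact mul_le_mul_of_nonneg_left (hIclose i) (ht0 i)
      _ = e₁ + κ := by rw [← Finset.sum_mul, ht1, one_mul]
  have h1 : ∑ i, t i * (Ji i - φ (p i) * Ii i)
      = (∑ i, t i * Ji i) - ∑ i, t i * (φ (p i) * Ii i) := by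
    rw [← Finset.sum_sub_distrib]
    exact Finset.sum_congr rfl fun i _ => by ring
  have h2 : ∑ i, t i * φ (p i) * (Ii i - X)
      = (∑ i, t i * (φ (p i) * Ii i)) - X * B := by
    rw [hBdef, Finset.mul_sum, ← Finset.sum_sub_distrib]
    exact Finset.sum_congr rfl fun i _ => by ring
  have h3 : ∑ i, t i * (Ii i - X) = (∑ i, t i * Ii i) - X := by
    have h4 : ∑ i, t i * X = X := by rw [← Finset.sum_mul, ht1, one_mul]
    calc ∑ i, t i * (Ii i - X) = ∑ i, (t i * Ii i - t i * X) :=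
          Finset.sum_congr rfl fun i _ => by ring
      _ = (∑ i, t i * Ii i) - ∑ i, t i * X := Finset.sum_sub_distrib _ _
      _ = (∑ i, t i * Ii i) - X := by rw [h4]
  have hkey : Num - B * Den
      = (∑ i, t i * (Ji i - φ (p i) * Ii i))
        + (∑ i, t i * φ (p i) * (Ii i - X))
        - B * (∑ i, t i * (Ii i - X)) + (BdN - B * BdD) := by
    rw [h1, h2, h3, hNumdef, hDendef]
    ring
  have habs : |Num - B * Den| ≤ 3 * e₁ + 2 * κ + 2 * R₀ := by
    rw [hkey]
    have t1 : |B * (∑ i, t i * (Ii i - X))| ≤ e₁ + κ := by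
      rw [abs_mul]
      calc |B| * |∑ i, t i * (Ii i - X)| ≤ 1 * (e₁ + κ) :=
            mul_le_mul hBabs hsum3 (abs_nonneg _) zero_le_one
        _ = e₁ + κ := one_mul _
    have t2 : |BdN - B * BdD| ≤ R₀ + R₀ := by
      calc |BdN - B * BdD| ≤ |BdN| + |B * BdD| := abs_sub _ _
        _ ≤ R₀ + R₀ := by
            apply add_le_add hBdNle
            rw [abs_mul]
            calc |B| * |BdD| ≤ 1 * R₀ := by
                  apply mul_le_mul hBabs _ (abs_nonneg _) zero_le_one
                  rw [abs_of_nonneg hBdD0]; exact hBdDle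
              _ = R₀ := one_mul _
    calc |(∑ i, t i * (Ji i - φ (p i) * Ii i))
          + (∑ i, t i * φ (p i) * (Ii i - X))
          - B * (∑ i, t i * (Ii i - X)) + (BdN - B * BdD)|
        ≤ |(∑ i, t i * (Ji i - φ (p i) * Ii i))
          + (∑ i, t i * φ (p i) * (Ii i - X))
          - B * (∑ i, t i * (Ii i - X))| + |BdN - B * BdD| := abs_add_le _ _
      _ ≤ (|(∑ i, t i * (Ji i - φ (p i) * Ii i))
          + (∑ i, t i * φ (p i) * (Ii i - X))|
          + |B * (∑ i, t i * (Ii i - X))|) + |BdN - B * BdD| := by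
          apply add_le_add_left (abs_sub _ _)
      _ ≤ ((|∑ i, t i * (Ji i - φ (p i) * Ii i)|
          + |∑ i, t i * φ (p i) * (Ii i - X)|)
          + |B * (∑ i, t i * (Ii i - X))|) + |BdN - B * BdD| := by
          apply add_le_add_left (add_le_add_left (abs_add_le _ _) _)
      _ ≤ ((e₁ + (e₁ + κ)) + (e₁ + κ)) + (R₀ + R₀) := by
          apply add_le_add _ t2
          exact add_le_add (add_le_add hsum1 hsum2) t1
      _ = 3 * e₁ + 2 * κ + 2 * R₀ := by ring
  have hden_low : A/(2*C₀^2) * ε^(-γ) ≤ Den := by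
    have h5 : ∑ i, t i * (A/(2*C₀^2) * ε^(-γ)) = A/(2*C₀^2) * ε^(-γ) := by
      rw [← Finset.sum_mul, ht1, one_mul]
    have h6 : (∑ i, t i * (A/(2*C₀^2) * ε^(-γ))) ≤ ∑ i, t i * Ii i :=
      Finset.sum_le_sum fun i _ => mul_le_mul_of_nonneg_left (hIlow i) (ht0 i)
    rw [hDendef]
    linarith
  have hden_pos : 0 < Den :=
    lt_of_lt_of_le (mul_pos (div_pos hA (by positivity))
      (Real.rpow_pos_of_pos hε _)) hden_low
  have hquot : Num / Den - B = (Num - B * Den) / Den := by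
    rw [eq_div_iff hden_pos.ne', sub_mul, div_mul_cancel₀ _ hden_pos.ne']
  rw [hquot, abs_div, abs_of_pos hden_pos, div_le_iff₀ hden_pos]
  have hεsplit : ε^((1:ℝ)-γ) = ε * ε^(-γ) := by
    rw [show (1:ℝ) - γ = 1 + (-γ) by ring, Real.rpow_add hε, Real.rpow_one]
  have hone_le : (1:ℝ) ≤ ε^((1:ℝ)-γ) := by
    have h := Real.rpow_le_rpow_of_exponent_ge hε hε1
      (show (1:ℝ) - γ ≤ 0 by linarith)
    rwa [Real.rpow_zero] at h
  calc |Num - B * Den| ≤ 3 * e₁ + 2 * κ + 2 * R₀ := habs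
    _ ≤ P * ε^((1:ℝ)-γ) := by
        rw [hPdef, he₁def]
        have h8 : 2*κ + 2*R₀ ≤ (2*κ + 2*R₀ + 1) * ε^((1:ℝ)-γ) := by
          calc 2*κ + 2*R₀ ≤ (2*κ + 2*R₀ + 1) * 1 := by linarith
            _ ≤ (2*κ + 2*R₀ + 1) * ε^((1:ℝ)-γ) :=
                mul_le_mul_of_nonneg_left hone_le (by linarith)
        have h9 : 3 * (C₀^2 * (Bm * ε^((1:ℝ)-γ))) + (2*κ + 2*R₀ + 1) * ε^((1:ℝ)-γ)
            = (3 * C₀ ^ 2 * Bm + 2 * κ + 2 * R₀ + 1) * ε^((1:ℝ)-γ) := by ring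
        linarith
    _ = (2 * C₀^2 / A * P) * ε * (A/(2*C₀^2) * ε^(-γ)) := by
        rw [hεsplit]
        field_simp
    _ ≤ (2 * C₀^2 / A * P) * ε * Den := by
        apply mul_le_mul_of_nonneg_left hden_low
        exact mul_nonneg hCpos.le hε.le
end

section
/- Let N ≥ 2 be an integer, Ω ⊂ ℝ^N a bounded open set, δ > 0, and let χ : ℝ^N → [0,1] be a smooth function with compact support contained in Ω and χ = 1 on {x ∈ Ω : dist(x, ℝ^N∖Ω) > δ/2}; set K = {x ∈ Ω : dist(x, ℝ^N∖Ω) ≥ δ} and assume K ≠ ∅. Let C_0 ≥ 1 and V : ℝ^N → ℝ be Lipschitz with constant C_0 and satisfy 1/C_0 ≤ V(x) ≤ C_0 on the closure of Ω. Fix an integer m ≥ 1. For points p_1, …, p_m ∈ K, weights t_1, …, t_m ≥ 0 with Σ t_i = 1, and ε > 0, define φ_{ε,σ}(x) = χ(x) log Σ_{i=1}^{m} t_i F_N / ( (ε^{N/(N−1)} + |x−p_i|^{N/(N−1)})^N V(p_i) ), where F_N = N (N²/(N−1))^{N−1}. Then there exist constants C > 0 and ε_0 ∈ (0,1) such that |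 log( ∫_Ω V e^{φ_{ε,σ}} dx ) − (N/(N−1)) log(1/ε) | ≤ C for all ε ∈ (0, ε_0], all p_1,…,p_m ∈ K and all weights t_1,…,t_m as above. -/
open MeasureTheory Real Metric Set
open scoped ENNReal

section Aux

variable {N : ℕ}

lemma my_base_cont (hN : 2 ≤ N) :
    Continuous (fun z : EuclideanSpace ℝ (Fin N) =>
      (((1:ℝ) + ‖z‖ ^ ((N : ℝ) / ((N : ℝ) - 1))) ^ N)⁻¹) := by
  have hq0 : (0:ℝ) ≤ (N : ℝ) / ((N : ℝ) - 1) := by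
    have h2 : (2:ℝ) ≤ (N:ℝ) := by exact_mod_cast hN
    apply div_nonneg <;> linarith
  apply Continuous.inv₀
  · exact ((continuous_const.add (continuous_norm.rpow_const (fun z => Or.inr hq0))).pow N)
  · intro z
    have : (0:ℝ) < 1 + ‖z‖ ^ ((N : ℝ) / ((N : ℝ) - 1)) := by
      have := Real.rpow_nonneg (norm_nonneg z) ((N : ℝ) / ((N : ℝ) - 1))
      linarith
    positivity

lemma my_base_integrable (hN : 2 ≤ N) :
    Integrable (fun z : EuclideanSpace ℝ (Fin N) =>
      (((1:ℝ) + ‖z‖ ^ ((N : ℝ) / ((N : ℝ) - 1))) ^ N)⁻¹) := by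
  have h2 : (2:ℝ) ≤ (N:ℝ) := by exact_mod_cast hN
  set q : ℝ := (N : ℝ) / ((N : ℝ) - 1) with hqdef
  have hq1 : 1 < q := by
    rw [hqdef, lt_div_iff₀ (by linarith)]; linarith
  have hq0 : (0:ℝ) < q := by linarith
  have hr : (Module.finrank ℝ (EuclideanSpace ℝ (Fin N)) : ℝ) < q * N := by
    rw [finrank_euclideanSpace_fin]
    nlinarith
  refine ((integrable_one_add_norm (μ := volume) hr).const_mul ((2:ℝ) ^ (q * N))).mono'
    (my_base_cont hN).aestronglyMeasurable (ae_of_all _ fun z => ?_)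
  set a : ℝ := ‖z‖ with hadef
  have ha : 0 ≤ a := norm_nonneg z
  have hpos : (0:ℝ) < 1 + a ^ q := by
    have := Real.rpow_nonneg ha q; linarith
  have step1 : (1 + a) ^ q ≤ 2 ^ q * (1 + a ^ q) := by
    have h1 : (1 + a) ^ q ≤ (2 * max 1 a) ^ q := by
      apply Real.rpow_le_rpow (by linarith) _ hq0.le
      rcases le_total a 1 with h | h
      · simp [max_eq_left h]; linarith
      · simp [max_eq_right h]; linarith
    have h2' : (2 * max 1 a) ^ q = 2 ^ q * (max 1 a) ^ q :=
      Real.mul_rpow (by norm_num) (le_max_of_le_left zero_le_one)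
    have h3 : (max 1 a) ^ q ≤ 1 + a ^ q := by
      rcases le_total a 1 with h | h
      · simp only [max_eq_left h, Real.one_rpow]
        have := Real.rpow_nonneg ha q; linarith
      · simp only [max_eq_right h]
        have h1a : (0:ℝ) ≤ a ^ q := Real.rpow_nonneg ha q
        linarith
    calc (1 + a) ^ q ≤ (2 * max 1 a) ^ q := h1
      _ = 2 ^ q * (max 1 a) ^ q := h2'
      _ ≤ 2 ^ q * (1 + a ^ q) := by
          apply mul_le_mul_of_nonneg_left h3 (Real.rpow_nonneg (by norm_num) q)
  have step2 : (1 + a) ^ (q * (N:ℝ)) ≤ 2 ^ (q * (N:ℝ)) * (1 + a ^ q) ^ N := by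
    have e1 : (1 + a) ^ (q * (N:ℝ)) = ((1 + a) ^ q) ^ N := by
      rw [Real.rpow_mul (by linarith), Real.rpow_natCast]
    have e2 : (2:ℝ) ^ (q * (N:ℝ)) = ((2:ℝ) ^ q) ^ N := by
      rw [Real.rpow_mul (by norm_num), Real.rpow_natCast]
    rw [e1, e2, ← mul_pow]
    exact pow_le_pow_left₀ (Real.rpow_nonneg (by linarith) q) step1 N
  have hu : (0:ℝ) < (1 + a) ^ (q * (N:ℝ)) := Real.rpow_pos_of_pos (by linarith) _
  rw [Real.norm_eq_abs, abs_of_nonneg (by positivity)]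
  rw [Real.rpow_neg (by linarith)]
  calc ((1 + a ^ q) ^ N)⁻¹ ≤ ((1 + a) ^ (q * (N:ℝ)) / 2 ^ (q * (N:ℝ)))⁻¹ := by
        apply inv_anti₀ (by positivity)
        rw [div_le_iff₀ (by positivity)]
        nlinarith [step2]
    _ = 2 ^ (q * (N:ℝ)) * ((1 + a) ^ (q * (N:ℝ)))⁻¹ := by
        rw [inv_div]; ring

lemma my_scaled_comp (hN : 2 ≤ N) {ε : ℝ} (hε : 0 < ε) :
    (fun z : EuclideanSpace ℝ (Fin N) =>
      ((ε ^ ((N : ℝ) / ((N : ℝ) - 1)) + ‖ε • z‖ ^ ((N : ℝ) / ((N : ℝ) - 1))) ^ N)⁻¹)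
    = fun z : EuclideanSpace ℝ (Fin N) =>
      ((ε ^ ((N : ℝ) / ((N : ℝ) - 1))) ^ N)⁻¹ *
        (((1:ℝ) + ‖z‖ ^ ((N : ℝ) / ((N : ℝ) - 1))) ^ N)⁻¹ := by
  set q : ℝ := (N : ℝ) / ((N : ℝ) - 1) with hqdef
  funext z
  have h1 : ‖ε • z‖ = ε * ‖z‖ := by
    rw [norm_smul, Real.norm_eq_abs, abs_of_pos hε]
  rw [h1, Real.mul_rpow hε.le (norm_nonneg z)]
  rw [show ε ^ q + ε ^ q * ‖z‖ ^ q = ε ^ q * (1 + ‖z‖ ^ q) by ring]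
  rw [mul_pow, mul_inv]

lemma my_scaled_integrable (hN : 2 ≤ N) {ε : ℝ} (hε : 0 < ε) :
    Integrable (fun x : EuclideanSpace ℝ (Fin N) =>
      ((ε ^ ((N : ℝ) / ((N : ℝ) - 1)) + ‖x‖ ^ ((N : ℝ) / ((N : ℝ) - 1))) ^ N)⁻¹) := by
  refine (integrable_comp_smul_iff volume _ hε.ne').1 ?_
  rw [my_scaled_comp hN hε]
  exact (my_base_integrable hN).const_mul _

lemma my_scaled_integral (hN : 2 ≤ N) {ε : ℝ} (hε : 0 < ε) :
    (∫ x : EuclideanSpace ℝ (Fin N),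
        ((ε ^ ((N : ℝ) / ((N : ℝ) - 1)) + ‖x‖ ^ ((N : ℝ) / ((N : ℝ) - 1))) ^ N)⁻¹)
    = ε ^ (-((N : ℝ) / ((N : ℝ) - 1))) *
      ∫ z : EuclideanSpace ℝ (Fin N),
        (((1:ℝ) + ‖z‖ ^ ((N : ℝ) / ((N : ℝ) - 1))) ^ N)⁻¹ := by
  have h2 : (2:ℝ) ≤ (N:ℝ) := by exact_mod_cast hN
  set q : ℝ := (N : ℝ) / ((N : ℝ) - 1) with hqdef
  have hN1 : ((N:ℝ) - 1) ≠ 0 := by linarith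
  have hqN : q * (N:ℝ) = (N:ℝ) + q := by
    rw [hqdef]; field_simp; ring
  have key := MeasureTheory.Measure.integral_comp_smul_of_nonneg (volume)
    (fun x : EuclideanSpace ℝ (Fin N) => ((ε ^ q + ‖x‖ ^ q) ^ N)⁻¹) ε (hR := hε.le)
  rw [my_scaled_comp hN hε, integral_const_mul, finrank_euclideanSpace_fin] at key
  have hpow : (0:ℝ) < ε ^ N := pow_pos hε N
  have : (∫ x : EuclideanSpace ℝ (Fin N), ((ε ^ q + ‖x‖ ^ q) ^ N)⁻¹)
      = ε ^ N * (((ε ^ q) ^ N)⁻¹ * ∫ z : EuclideanSpace ℝ (Fin N), ((1 + ‖z‖ ^ q) ^ N)⁻¹) := by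
    rw [key, smul_eq_mul, ← mul_assoc, mul_inv_cancel₀ hpow.ne', one_mul]
  rw [this, ← mul_assoc]
  congr 1
  have e1 : ((ε ^ q) ^ N : ℝ) = ε ^ (q * (N:ℝ)) := by
    rw [← Real.rpow_natCast (ε ^ q) N, ← Real.rpow_mul hε.le]
  have e2 : (ε ^ N : ℝ) = ε ^ ((N:ℝ)) := (Real.rpow_natCast ε N).symm
  rw [e1, e2, ← Real.rpow_neg hε.le, ← Real.rpow_add hε]
  congr 1
  linarith

end Aux

set_option maxHeartbeats 2000000 in
/-- Uniform expansion of `log ∫ V e^{φ_{ε,σ}}`. -/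
theorem bubble_log_integral_expansion (N : ℕ) (hN : 2 ≤ N)
    (Ω : Set (EuclideanSpace ℝ (Fin N))) (hΩo : IsOpen Ω) (hΩb : Bornology.IsBounded Ω)
    (δ : ℝ) (hδ : 0 < δ)
    (χ : EuclideanSpace ℝ (Fin N) → ℝ) (hχsm : ContDiff ℝ (⊤ : ℕ∞) χ)
    (hχc : HasCompactSupport χ) (hχΩ : tsupport χ ⊆ Ω)
    (hχ01 : ∀ x, 0 ≤ χ x ∧ χ x ≤ 1)
    (hχ1 : ∀ x ∈ Ω, δ / 2 < Metric.infDist x Ωᶜ → χ x = 1)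
    (hK : ∃ x ∈ Ω, δ ≤ Metric.infDist x Ωᶜ)
    (C₀ : ℝ) (hC₀ : 1 ≤ C₀) (V : EuclideanSpace ℝ (Fin N) → ℝ)
    (hVlip : LipschitzWith (Real.toNNReal C₀) V)
    (hV : ∀ x ∈ closure Ω, 1 / C₀ ≤ V x ∧ V x ≤ C₀)
    (m : ℕ) (hm : 1 ≤ m)
    :
    ∃ C : ℝ, 0 < C ∧ ∃ ε₀ : ℝ, 0 < ε₀ ∧ ε₀ < 1 ∧
      ∀ ε : ℝ, 0 < ε → ε ≤ ε₀ →
      ∀ (p : Fin m → EuclideanSpace ℝ (Fin N)) (t : Fin m → ℝ),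
        (∀ i, p i ∈ Ω ∧ δ ≤ Metric.infDist (p i) Ωᶜ) →
        (∀ i, 0 ≤ t i) → (∑ i, t i) = 1 →
        |Real.log (∫ x in Ω, V x * Real.exp (testFun N m χ V p t ε x)) -
            ((N : ℝ) / ((N : ℝ) - 1)) * Real.log (1 / ε)| ≤ C := by
  classical
  have h2 : (2:ℝ) ≤ (N:ℝ) := by exact_mod_cast hN
  set q : ℝ := (N : ℝ) / ((N : ℝ) - 1) with hqdef
  have hq1 : (1:ℝ) < q := by rw [hqdef, lt_div_iff₀ (by linarith)]; linarith
  have hq0 : (0:ℝ) < q := by linarith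
  have hqN : q * (N:ℝ) = (N:ℝ) + q := by
    have hne : ((N:ℝ) - 1) ≠ 0 := by linarith
    have hkey : q * ((N:ℝ) - 1) = (N:ℝ) := by
      rw [hqdef]; field_simp
    linear_combination hkey
  have hFN : (0:ℝ) < FN N := by
    rw [FN]
    have hN0 : (0:ℝ) < (N:ℝ) := by linarith
    have : (0:ℝ) < (N:ℝ) ^ 2 / ((N:ℝ) - 1) := by
      apply div_pos (by positivity) (by linarith)
    positivity
  have hC₀pos : (0:ℝ) < C₀ := by linarith
  set I : ℝ := ∫ z : EuclideanSpace ℝ (Fin N), (((1:ℝ) + ‖z‖ ^ q) ^ N)⁻¹ with hIdef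
  have hIpos : 0 < I := by
    rw [hIdef]
    rw [integral_pos_iff_support_of_nonneg (fun z => by positivity) (my_base_integrable hN)]
    have hsupp : (Function.support fun z : EuclideanSpace ℝ (Fin N) =>
        (((1:ℝ) + ‖z‖ ^ q) ^ N)⁻¹) = Set.univ := by
      ext z
      simp only [Function.mem_support, mem_univ, iff_true]
      have : (0:ℝ) < 1 + ‖z‖ ^ q := by
        have := Real.rpow_nonneg (norm_nonneg z) q; linarith
      positivity
    rw [hsupp]
    exact lt_of_lt_of_le (measure_ball_pos volume (0 : EuclideanSpace ℝ (Fin N)) one_pos)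
      (measure_mono (subset_univ _))
  set ω : ℝ := (volume (ball (0 : EuclideanSpace ℝ (Fin N)) 1)).toReal with hωdef
  have hωpos : 0 < ω := by
    rw [hωdef]
    exact ENNReal.toReal_pos (measure_ball_pos volume _ one_pos).ne' measure_ball_lt_top.ne
  have hΩfin : volume Ω ≠ ⊤ := hΩb.measure_lt_top.ne
  set volΩ : ℝ := (volume Ω).toReal with hvolΩdef
  have hvolΩ : 0 ≤ volΩ := ENNReal.toReal_nonneg
  have hmpos : (0:ℝ) < (m:ℝ) := by exact_mod_cast hm
  set c₁ : ℝ := ω * FN N / ((m:ℝ) * C₀ ^ 2 * 2 ^ N) with hc₁def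
  set c₂ : ℝ := C₀ ^ 2 * FN N * I + C₀ * volΩ with hc₂def
  have hc₁pos : 0 < c₁ := by rw [hc₁def]; positivity
  have hc₂pos : 0 < c₂ := by
    have h1 : 0 < C₀ ^ 2 * FN N * I := by positivity
    have h2' : 0 ≤ C₀ * volΩ := mul_nonneg hC₀pos.le hvolΩ
    rw [hc₂def]; linarith
  refine ⟨|Real.log c₁| + |Real.log c₂| + 1, by positivity,
    min (δ / 4) (1 / 2), lt_min (by linarith) (by norm_num),
    lt_of_le_of_lt (min_le_right _ _) (by norm_num), ?_⟩
  intro ε hε hεle p t hp ht htsum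
  have hεδ : ε ≤ δ / 4 := hεle.trans (min_le_left _ _)
  have hε1 : ε ≤ 1 := hεle.trans ((min_le_right _ _).trans (by norm_num))
  have hVp : ∀ i, 1 / C₀ ≤ V (p i) ∧ V (p i) ≤ C₀ := fun i => hV _ (subset_closure (hp i).1)
  have hVppos : ∀ i, 0 < V (p i) := fun i => lt_of_lt_of_le (by positivity) (hVp i).1
  set S : EuclideanSpace ℝ (Fin N) → ℝ :=
    fun x => ∑ i, t i * (FN N / ((ε ^ q + ‖x - p i‖ ^ q) ^ N * V (p i))) with hSdef
  have htf : ∀ x, testFun N m χ V p t ε x = χ x * Real.log (S x) := fun x => rfl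
  have hden : ∀ (i : Fin m) (x : EuclideanSpace ℝ (Fin N)),
      0 < (ε ^ q + ‖x - p i‖ ^ q) ^ N * V (p i) := by
    intro i x
    have h1 : 0 < ε ^ q := Real.rpow_pos_of_pos hε q
    have h2' : 0 ≤ ‖x - p i‖ ^ q := Real.rpow_nonneg (norm_nonneg _) q
    exact mul_pos (pow_pos (by linarith) N) (hVppos i)
  have hterm : ∀ (i : Fin m) (x : EuclideanSpace ℝ (Fin N)),
      0 ≤ t i * (FN N / ((ε ^ q + ‖x - p i‖ ^ q) ^ N * V (p i))) :=
    fun i x => mul_nonneg (ht i) (div_nonneg hFN.le (hden i x).le)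
  haveI : Nonempty (Fin m) := ⟨⟨0, hm⟩⟩
  obtain ⟨i₀, hi₀⟩ : ∃ i, 1 / (m:ℝ) ≤ t i := by
    by_contra hcon
    push_neg at hcon
    have hlt : (∑ i, t i) < ∑ _i : Fin m, 1 / (m:ℝ) :=
      Finset.sum_lt_sum_of_nonempty Finset.univ_nonempty (fun i _ => hcon i)
    rw [htsum, Finset.sum_const, Finset.card_univ, Fintype.card_fin, nsmul_eq_mul] at hlt
    rw [mul_one_div, div_self hmpos.ne'] at hlt
    exact lt_irrefl _ hlt
  have hi₀pos : 0 < t i₀ := lt_of_lt_of_le (by positivity) hi₀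
  have hSpos : ∀ x, 0 < S x := by
    intro x
    exact Finset.sum_pos' (fun i _ => hterm i x)
      ⟨i₀, Finset.mem_univ _, mul_pos hi₀pos (div_pos hFN (hden i₀ x))⟩
  have hScont : Continuous S := by
    apply continuous_finset_sum
    intro i _
    apply Continuous.mul continuous_const
    apply Continuous.div continuous_const
    · exact ((continuous_const.add (((continuous_id.sub continuous_const).norm).rpow_const
        (fun x => Or.inr hq0.le))).pow N).mul continuous_const
    · intro x; exact (hden i x).ne'
  set g : EuclideanSpace ℝ (Fin N) → ℝ :=
    fun x => V x * Real.exp (testFun N m χ V p t ε x) with hgdef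
  have hgcont : Continuous g := by
    apply hVlip.continuous.mul
    apply Real.continuous_exp.comp
    exact (hχsm.continuous.mul (hScont.log (fun x => (hSpos x).ne')) :
      Continuous fun x => χ x * Real.log (S x))
  set gb : EuclideanSpace ℝ (Fin N) → ℝ := fun y => ((ε ^ q + ‖y‖ ^ q) ^ N)⁻¹ with hgbdef
  have hgb_int : Integrable gb := my_scaled_integrable hN hε
  have hgb_val : ∫ y, gb y = ε ^ (-q) * I := my_scaled_integral hN hε
  have hgbnn : ∀ y, 0 ≤ gb y := by
    intro y
    have h1 : 0 < ε ^ q := Real.rpow_pos_of_pos hε q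
    have h2' : 0 ≤ ‖y‖ ^ q := Real.rpow_nonneg (norm_nonneg _) q
    have : 0 < (ε ^ q + ‖y‖ ^ q) ^ N := pow_pos (by linarith) N
    positivity
  set h : EuclideanSpace ℝ (Fin N) → ℝ :=
    fun x => ∑ i, t i * (FN N * C₀ * gb (x - p i)) with hhdef
  have hh_int_i : ∀ i : Fin m, Integrable
      (fun x : EuclideanSpace ℝ (Fin N) => t i * (FN N * C₀ * gb (x - p i))) :=
    fun i => ((hgb_int.comp_sub_right (p i)).const_mul (FN N * C₀)).const_mul (t i)
  have hh_int : Integrable h := integrable_finset_sum _ (fun i _ => hh_int_i i)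
  have hh_val : ∫ x, h x = FN N * C₀ * (ε ^ (-q) * I) := by
    rw [hhdef, integral_finset_sum _ (fun i _ => hh_int_i i)]
    have hi : ∀ i : Fin m, (∫ x, t i * (FN N * C₀ * gb (x - p i)))
        = t i * (FN N * C₀ * (ε ^ (-q) * I)) := by
      intro i
      rw [integral_const_mul, integral_const_mul, integral_sub_right_eq_self gb (p i), hgb_val]
    simp only [hi]
    rw [← Finset.sum_mul, htsum, one_mul]
  have hh_nn : ∀ x, 0 ≤ h x := fun x => Finset.sum_nonneg fun i _ =>
    mul_nonneg (ht i) (mul_nonneg (by positivity) (hgbnn _))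
  have hSle : ∀ x, S x ≤ h x := by
    intro x
    apply Finset.sum_le_sum
    intro i _
    apply mul_le_mul_of_nonneg_left _ (ht i)
    have hD : 0 < (ε ^ q + ‖x - p i‖ ^ q) ^ N := by
      have h1 : 0 < ε ^ q := Real.rpow_pos_of_pos hε q
      have h2' : 0 ≤ ‖x - p i‖ ^ q := Real.rpow_nonneg (norm_nonneg _) q
      exact pow_pos (by linarith) N
    have hVinv : (V (p i))⁻¹ ≤ C₀ := by
      have h1 : C₀⁻¹ ≤ V (p i) := by
        have := (hVp i).1; rwa [one_div] at this
      calc (V (p i))⁻¹ ≤ (C₀⁻¹)⁻¹ := inv_anti₀ (by positivity) h1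
        _ = C₀ := inv_inv C₀
    rw [div_eq_mul_inv, mul_inv]
    calc FN N * (((ε ^ q + ‖x - p i‖ ^ q) ^ N)⁻¹ * (V (p i))⁻¹)
        = FN N * (V (p i))⁻¹ * ((ε ^ q + ‖x - p i‖ ^ q) ^ N)⁻¹ := by ring
      _ ≤ FN N * C₀ * ((ε ^ q + ‖x - p i‖ ^ q) ^ N)⁻¹ := by
          apply mul_le_mul_of_nonneg_right _ (inv_nonneg.2 hD.le)
          exact mul_le_mul_of_nonneg_left hVinv hFN.le
      _ = FN N * C₀ * gb (x - p i) := rfl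
  have hexp_le : ∀ x, Real.exp (testFun N m χ V p t ε x) ≤ S x + 1 := by
    intro x
    rw [htf x]
    rcases le_or_gt 0 (Real.log (S x)) with hl | hl
    · have hle : χ x * Real.log (S x) ≤ Real.log (S x) := by
        nlinarith [(hχ01 x).1, (hχ01 x).2]
      calc Real.exp (χ x * Real.log (S x)) ≤ Real.exp (Real.log (S x)) := Real.exp_le_exp.2 hle
        _ = S x := Real.exp_log (hSpos x)
        _ ≤ S x + 1 := by linarith
    · have hle : χ x * Real.log (S x) ≤ 0 := by
        nlinarith [(hχ01 x).1]
      calc Real.exp (χ x * Real.log (S x)) ≤ Real.exp 0 := Real.exp_le_exp.2 hle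
        _ = 1 := Real.exp_zero
        _ ≤ S x + 1 := by linarith [(hSpos x).le]
  have hbound : ∀ x ∈ Ω, ‖g x‖ ≤ C₀ * h x + C₀ := by
    intro x hx
    have hVx := hV x (subset_closure hx)
    have hVxpos : 0 < V x := lt_of_lt_of_le (by positivity) hVx.1
    rw [Real.norm_eq_abs, hgdef, abs_of_nonneg (mul_nonneg hVxpos.le (Real.exp_pos _).le)]
    have hmm : V x * Real.exp (testFun N m χ V p t ε x) ≤ C₀ * (h x + 1) := by
      apply mul_le_mul hVx.2 _ (Real.exp_pos _).le hC₀pos.le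
      exact (hexp_le x).trans (by linarith [hSle x])
    linarith
  have hb_intΩ : IntegrableOn (fun x => C₀ * h x + C₀) Ω volume := by
    apply Integrable.add
    · exact (hh_int.const_mul C₀).integrableOn
    · exact integrableOn_const hΩb.measure_lt_top.ne
  have hg_intΩ : IntegrableOn g Ω volume := by
    apply Integrable.mono' hb_intΩ hgcont.aestronglyMeasurable.restrict
    exact (ae_restrict_iff' hΩo.measurableSet).2 (ae_of_all _ hbound)
  set A : ℝ := ∫ x in Ω, g x with hAdef
  have hupper : A ≤ c₂ * ε ^ (-q) := by
    have h1 : A ≤ ∫ x in Ω, (C₀ * h x + C₀) := by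
      apply setIntegral_mono_on hg_intΩ hb_intΩ hΩo.measurableSet
      intro x hx
      exact (le_abs_self _).trans (by simpa [Real.norm_eq_abs] using hbound x hx)
    have h2' : (∫ x in Ω, (C₀ * h x + C₀)) = C₀ * (∫ x in Ω, h x) + volΩ * C₀ := by
      rw [integral_add ((hh_int.const_mul C₀).integrableOn)
        (integrableOn_const hΩb.measure_lt_top.ne)]
      simp only [integral_const_mul, setIntegral_const, smul_eq_mul, measureReal_def, hvolΩdef]
    have h3 : (∫ x in Ω, h x) ≤ FN N * C₀ * (ε ^ (-q) * I) := by
      rw [← hh_val]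
      exact setIntegral_le_integral hh_int (ae_of_all _ hh_nn)
    have h4 : (1:ℝ) ≤ ε ^ (-q) := Real.one_le_rpow_of_pos_of_le_one_of_nonpos hε hε1 (by linarith)
    have h5 : 0 < ε ^ (-q) := Real.rpow_pos_of_pos hε _
    have h6 : A ≤ C₀ * (FN N * C₀ * (ε ^ (-q) * I)) + volΩ * C₀ := by
      rw [h2'] at h1
      have := mul_le_mul_of_nonneg_left h3 hC₀pos.le
      linarith
    have h7 : C₀ * (FN N * C₀ * (ε ^ (-q) * I)) + volΩ * C₀ ≤ c₂ * ε ^ (-q) := by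
      rw [hc₂def]
      have h8 : 0 ≤ C₀ * volΩ := mul_nonneg hC₀pos.le hvolΩ
      nlinarith [mul_nonneg h8 (sub_nonneg.2 h4)]
    linarith
  set B : Set (EuclideanSpace ℝ (Fin N)) := ball (p i₀) ε with hBdef
  have hinfB : ∀ x ∈ B, δ - ε ≤ infDist x Ωᶜ := by
    intro x hx
    have hd : dist (p i₀) x < ε := by
      rw [dist_comm]; exact mem_ball.1 hx
    have hinf : infDist (p i₀) Ωᶜ ≤ infDist x Ωᶜ + dist (p i₀) x :=
      Metric.infDist_le_infDist_add_dist
    linarith [(hp i₀).2]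
  have hBΩ : B ⊆ Ω := by
    intro x hx
    by_contra hxΩ
    have h0 : infDist x Ωᶜ = 0 := Metric.infDist_zero_of_mem hxΩ
    have := hinfB x hx
    linarith
  have hχB : ∀ x ∈ B, χ x = 1 := by
    intro x hx
    exact hχ1 x (hBΩ hx) (by linarith [hinfB x hx])
  set clow : ℝ := (1 / C₀) * ((1 / (m:ℝ)) * (FN N / ((2 * ε ^ q) ^ N * C₀))) with hclowdef
  have hεq : 0 < ε ^ q := Real.rpow_pos_of_pos hε q
  have hlow : ∀ x ∈ B, clow ≤ g x := by
    intro x hx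
    have hxΩ := hBΩ hx
    have hVx := hV x (subset_closure hxΩ)
    have hVxpos : 0 < V x := lt_of_lt_of_le (by positivity) hVx.1
    have hgx : g x = V x * S x := by
      rw [hgdef]
      simp only [htf x, hχB x hx, one_mul, Real.exp_log (hSpos x)]
    rw [hgx, hclowdef]
    have hSxlow : (1 / (m:ℝ)) * (FN N / ((2 * ε ^ q) ^ N * C₀)) ≤ S x := by
      have hsingle : t i₀ * (FN N / ((ε ^ q + ‖x - p i₀‖ ^ q) ^ N * V (p i₀))) ≤ S x :=
        Finset.single_le_sum (fun i _ => hterm i x) (Finset.mem_univ i₀)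
      refine le_trans ?_ hsingle
      have hxp : ‖x - p i₀‖ ^ q ≤ ε ^ q := by
        apply Real.rpow_le_rpow (norm_nonneg _) _ hq0.le
        rw [← dist_eq_norm]
        exact (mem_ball.1 hx).le
      have hden_le : (ε ^ q + ‖x - p i₀‖ ^ q) ^ N * V (p i₀) ≤ (2 * ε ^ q) ^ N * C₀ := by
        apply mul_le_mul _ (hVp i₀).2 (hVppos i₀).le (by positivity)
        apply pow_le_pow_left₀ (by positivity) _ N
        linarith
      gcongr
      all_goals first
        | exact hden i₀ x
        | exact hi₀
        | exact hden_le
        | positivity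
    calc (1 / C₀) * ((1 / (m:ℝ)) * (FN N / ((2 * ε ^ q) ^ N * C₀)))
        ≤ V x * ((1 / (m:ℝ)) * (FN N / ((2 * ε ^ q) ^ N * C₀))) := by
          apply mul_le_mul_of_nonneg_right hVx.1
          positivity
      _ ≤ V x * S x := mul_le_mul_of_nonneg_left hSxlow hVxpos.le
  haveI : Nontrivial (EuclideanSpace ℝ (Fin N)) :=
    Module.nontrivial_of_finrank_pos (R := ℝ) (by rw [finrank_euclideanSpace_fin]; omega)
  have hBvol : (volume B).toReal = ε ^ N * ω := by
    rw [hBdef, Measure.addHaar_ball volume (p i₀) hε.le, finrank_euclideanSpace_fin,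
      ENNReal.toReal_mul, ENNReal.toReal_ofReal (by positivity), hωdef]
  have hgnnΩ : 0 ≤ᵐ[volume.restrict Ω] g := by
    refine (ae_restrict_iff' hΩo.measurableSet).2 (ae_of_all _ fun x hx => ?_)
    have hVx := hV x (subset_closure hx)
    have hVxpos : 0 < V x := lt_of_lt_of_le (by positivity) hVx.1
    exact mul_nonneg hVxpos.le (Real.exp_pos _).le
  have hlow2 : (ε ^ N * ω) * clow ≤ A := by
    have h1 : (∫ _x in B, clow) ≤ ∫ x in B, g x := by
      apply setIntegral_mono_on (integrableOn_const measure_ball_lt_top.ne)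
        (hg_intΩ.mono_set hBΩ) measurableSet_ball hlow
    rw [setIntegral_const, smul_eq_mul, measureReal_def, hBvol] at h1
    have h2' : (∫ x in B, g x) ≤ A :=
      setIntegral_mono_set hg_intΩ hgnnΩ (HasSubset.Subset.eventuallyLE hBΩ)
    linarith
  have e1 : ((ε ^ q) ^ N : ℝ) = ε ^ (q * (N:ℝ)) := by
    rw [← Real.rpow_natCast (ε ^ q) N, ← Real.rpow_mul hε.le]
  have e2 : (ε ^ N : ℝ) = ε ^ ((N:ℝ)) := (Real.rpow_natCast ε N).symm
  have e3 : ε ^ ((N:ℝ)) * (ε ^ (q * (N:ℝ)))⁻¹ = ε ^ (-q) := by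
    rw [← Real.rpow_neg hε.le, ← Real.rpow_add hε]
    congr 1
    linarith
  have hclow_eq : (ε ^ N * ω) * clow = c₁ * ε ^ (-q) := by
    rw [hclowdef, hc₁def, ← e3]
    rw [mul_pow (2:ℝ) (ε ^ q) N, e1, e2]
    have hne1 : (ε : ℝ) ^ (q * (N:ℝ)) ≠ 0 := (Real.rpow_pos_of_pos hε _).ne'
    have hne2 : ((2:ℝ) ^ N : ℝ) ≠ 0 := by positivity
    field_simp
  have hlower : c₁ * ε ^ (-q) ≤ A := by rw [← hclow_eq]; exact hlow2
  have h5 : 0 < ε ^ (-q) := Real.rpow_pos_of_pos hε _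
  have hApos : 0 < A := lt_of_lt_of_le (by positivity) hlower
  have hAl : c₁ ≤ A * ε ^ q := by
    have hh1 := mul_le_mul_of_nonneg_right hlower hεq.le
    rwa [mul_assoc, Real.rpow_neg hε.le, inv_mul_cancel₀ hεq.ne', mul_one] at hh1
  have hAu : A * ε ^ q ≤ c₂ := by
    have hh1 := mul_le_mul_of_nonneg_right hupper hεq.le
    rwa [mul_assoc, Real.rpow_neg hε.le, inv_mul_cancel₀ hεq.ne', mul_one] at hh1
  have hprod : 0 < A * ε ^ q := mul_pos hApos hεq
  have hgoal_eq : Real.log A - q * Real.log (1 / ε) = Real.log (A * ε ^ q) := by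
    rw [Real.log_mul hApos.ne' hεq.ne', Real.log_rpow hε, one_div, Real.log_inv]
    ring
  rw [hgoal_eq]
  have hl1 : Real.log c₁ ≤ Real.log (A * ε ^ q) := Real.log_le_log hc₁pos hAl
  have hl2 : Real.log (A * ε ^ q) ≤ Real.log c₂ := Real.log_le_log hprod hAu
  rw [abs_le]
  have hn1 : 0 ≤ |Real.log c₁| := abs_nonneg _
  have hn2 : 0 ≤ |Real.log c₂| := abs_nonneg _
  constructor
  · have := neg_abs_le (Real.log c₁)
    linarith
  · have := le_abs_self (Real.log c₂)
    linarith
end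

section
/- Let N ≥ 2 be an integer, m ≥ 1 an integer, p_1, …, p_m ∈ ℝ^N, t_1, …, t_m ≥ 0 with Σ t_i = 1 and at least one t_i > 0, v_1, …, v_m > 0, and ε > 0. Define φ̃(x) = log Σ_{i=1}^{m} t_i v_i^{-1} (ε^{N/(N−1)} + |x−p_i|^{N/(N−1)})^{−N}. Then φ̃ is differentiable at every x ∉ {p_1,…,p_m} and its gradient satisfies |∇φ̃(x)| ≤ (N²/(N−1)) / max( ε , min_{1≤i≤m} |x−p_i| ); in particular |∇φ̃(x)| ≤ (N²/(N−1))/ε and |∇φ̃(x)| ≤ (N²/(N−1))/min_i |x−p_i|. -/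
open MeasureTheory Real Metric Set
open scoped ENNReal

/-- The logarithmic sum of bubbles `φ̃`. -/
noncomputable def phiTilde (N m : ℕ) (p : Fin m → EuclideanSpace ℝ (Fin N))
    (t v : Fin m → ℝ) (ε : ℝ) (x : EuclideanSpace ℝ (Fin N)) : ℝ :=
  Real.log (∑ i, t i * (v i)⁻¹ *
    ((ε ^ ((N : ℝ) / ((N : ℝ) - 1)) + ‖x - p i‖ ^ ((N : ℝ) / ((N : ℝ) - 1))) ^ N)⁻¹)

/-!
Write `q = N/(N-1)` and `U_i(y) = (ε^q + |y - p_i|^q)^{-N}`, so that `φ̃ = log S` with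
`S = Σ c_i U_i`, `c_i ≥ 0`. The bubble `U_i` is radial about `p_i`, and with `r = |x - p_i|`
its gradient has size `N q r^{q-1} (ε^q + r^q)^{-1} U_i`. Since
`max(ε, r) r^{q-1} ≤ ε^q + r^q`, this is at most `(N q / M) U_i` for any `M ≤ max(ε, r)`, in
particular for `M = max(ε, min_i |x - p_i|)`. Summing, `|∇S| ≤ (N q / M) S`, hence
`|∇φ̃| = |∇S| / S ≤ N q / M`, and `N q = N²/(N-1)`.
-/

lemma max_mul_rpow_sub_one_le_rpow_add_rpow {ε r q : ℝ} (hε : 0 ≤ ε) (hr : 0 ≤ r)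
    (hq : 1 ≤ q) : max ε r * r ^ (q - 1) ≤ ε ^ q + r ^ q := by
  have hq' : q - 1 + 1 ≠ 0 := by linarith
  rcases le_total r ε with h | h
  · calc max ε r * r ^ (q - 1) ≤ ε * ε ^ (q - 1) := by
          rw [max_eq_left h]; gcongr
      _ = ε ^ q := by rw [mul_comm, ← rpow_add_one' hε hq', sub_add_cancel]
      _ ≤ ε ^ q + r ^ q := le_add_of_nonneg_right (by positivity)
  · calc max ε r * r ^ (q - 1) = r ^ q := by
          rw [max_eq_right h, mul_comm, ← rpow_add_one' hr hq', sub_add_cancel]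
      _ ≤ ε ^ q + r ^ q := le_add_of_nonneg_left (by positivity)

lemma hasDerivAt_inv_pow_add_rpow {a q r : ℝ} (n : ℕ) (hr : 0 < r) (hu : a + r ^ q ≠ 0) :
    HasDerivAt (fun s => ((a + s ^ q) ^ n)⁻¹)
      (-(n * q * r ^ (q - 1) * ((a + r ^ q) ^ (n + 1))⁻¹)) r := by
  refine ((((hasDerivAt_rpow_const (Or.inl hr.ne')).const_add a).fun_pow n).fun_inv
    (pow_ne_zero n hu)).congr_deriv ?_
  rcases n with _ | n
  · simp
  · rw [Nat.add_sub_cancel]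
    field_simp
    ring

section Radial

variable {E : Type*} [NormedAddCommGroup E] [InnerProductSpace ℝ E]

lemma HasDerivAt.norm_fderiv_comp_norm_sub_le {g : ℝ → ℝ} {g' : ℝ} {p x : E}
    (hg : HasDerivAt g g' ‖x - p‖) (hx : x ≠ p) :
    DifferentiableAt ℝ (fun y => g ‖y - p‖) x ∧
      ‖fderiv ℝ (fun y => g ‖y - p‖) x‖ ≤ |g'| := by
  have hnorm : DifferentiableAt ℝ (fun y : E => ‖y - p‖) x :=
    ((differentiableAt_id.sub_const p).norm ℝ (sub_ne_zero.mpr hx))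
  have hcomp : HasFDerivAt (fun y => g ‖y - p‖) (g' • fderiv ℝ (fun y : E => ‖y - p‖) x) x :=
    hg.comp_hasFDerivAt x hnorm.hasFDerivAt
  refine ⟨hcomp.differentiableAt, ?_⟩
  have hlip : LipschitzWith 1 (fun y : E => ‖y - p‖) := by
    simpa only [dist_eq_norm] using LipschitzWith.dist_left p
  calc ‖fderiv ℝ (fun y => g ‖y - p‖) x‖ = |g'| * ‖fderiv ℝ (fun y : E => ‖y - p‖) x‖ := by
        rw [hcomp.fderiv, norm_smul, Real.norm_eq_abs]
    _ ≤ |g'| * 1 := by gcongr; simpa using norm_fderiv_le_of_lipschitz ℝ hlip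
    _ = |g'| := mul_one _

end Radial

section LogSum

variable {E : Type*} [NormedAddCommGroup E] [NormedSpace ℝ E] {x : E} {K : ℝ}

lemma norm_fderiv_log_le {S : E → ℝ} (hS : DifferentiableAt ℝ S x) (hpos : 0 < S x)
    (hK : ‖fderiv ℝ S x‖ ≤ K * S x) : ‖fderiv ℝ (fun y => log (S y)) x‖ ≤ K := by
  rw [(hS.hasFDerivAt.log hpos.ne').fderiv, norm_smul, norm_inv, Real.norm_of_nonneg hpos.le,
    inv_mul_le_iff₀ hpos, mul_comm]
  exact hK

lemma norm_fderiv_sum_mul_le {ι : Type*} [Fintype ι] {f : ι → E → ℝ} {c : ι → ℝ}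
    (hf : ∀ i, DifferentiableAt ℝ (f i) x) (hc : ∀ i, 0 ≤ c i)
    (hK : ∀ i, ‖fderiv ℝ (f i) x‖ ≤ K * f i x) :
    ‖fderiv ℝ (fun y => ∑ i, c i * f i y) x‖ ≤ K * ∑ i, c i * f i x := by
  rw [fderiv_fun_sum fun i _ => (hf i).const_mul (c i), Finset.mul_sum]
  refine (norm_sum_le _ _).trans (Finset.sum_le_sum fun i _ => ?_)
  rw [fderiv_const_mul (hf i), norm_smul, Real.norm_of_nonneg (hc i), mul_left_comm]
  exact mul_le_mul_of_nonneg_left (hK i) (hc i)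

end LogSum

section Bubble

variable {E : Type*} [NormedAddCommGroup E]

noncomputable def bubble (ε q : ℝ) (n : ℕ) (p y : E) : ℝ := ((ε ^ q + ‖y - p‖ ^ q) ^ n)⁻¹

variable {ε q M : ℝ} {n : ℕ} {p x : E}

lemma bubble_pos (hε : 0 < ε) : 0 < bubble ε q n p x := by
  unfold bubble; positivity

variable [InnerProductSpace ℝ E]

lemma norm_fderiv_bubble_le (hε : 0 < ε) (hq : 1 ≤ q) (hx : x ≠ p) (hM : 0 < M)
    (hMle : M ≤ max ε ‖x - p‖) :
    DifferentiableAt ℝ (bubble ε q n p) x ∧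
      ‖fderiv ℝ (bubble ε q n p) x‖ ≤ n * q / M * bubble ε q n p x := by
  set r := ‖x - p‖ with hr_def
  have hr : 0 < r := norm_pos_iff.mpr (sub_ne_zero.mpr hx)
  set u := ε ^ q + r ^ q with hu_def
  have hu : 0 < u := by positivity
  obtain ⟨hdiff, hle⟩ :=
    (hasDerivAt_inv_pow_add_rpow n hr hu.ne').norm_fderiv_comp_norm_sub_le hx
  refine ⟨hdiff, hle.trans ?_⟩
  have hkey : M * r ^ (q - 1) ≤ u := (mul_le_mul_of_nonneg_right hMle (by positivity)).trans
    (max_mul_rpow_sub_one_le_rpow_add_rpow hε.le hr.le hq)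
  rw [abs_neg, abs_of_nonneg (by positivity), bubble, ← hr_def, ← hu_def, pow_succ]
  calc n * q * r ^ (q - 1) * (u ^ n * u)⁻¹ = n * q / M * (u ^ n)⁻¹ * (M * r ^ (q - 1) / u) := by
        field_simp
    _ ≤ n * q / M * (u ^ n)⁻¹ * 1 := by gcongr; exact (div_le_one hu).mpr hkey
    _ = n * q / M * (u ^ n)⁻¹ := mul_one _

end Bubble

theorem phiTilde_gradient_bound_general (N m : ℕ) (hN : 2 ≤ N)
    (p : Fin m → EuclideanSpace ℝ (Fin N)) (t : Fin m → ℝ)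
    (ht0 : ∀ i, 0 ≤ t i) (htpos : ∃ i, 0 < t i)
    (v : Fin m → ℝ) (hv : ∀ i, 0 < v i) (ε : ℝ) (hε : 0 < ε) :
    ∀ x : EuclideanSpace ℝ (Fin N), (∀ i, x ≠ p i) →
      DifferentiableAt ℝ (phiTilde N m p t v ε) x ∧
      ‖gradient (phiTilde N m p t v ε) x‖ ≤
        ((N : ℝ) ^ 2 / ((N : ℝ) - 1)) / max ε (⨅ i, ‖x - p i‖) ∧
      ‖gradient (phiTilde N m p t v ε) x‖ ≤ ((N : ℝ) ^ 2 / ((N : ℝ) - 1)) / ε ∧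
      ‖gradient (phiTilde N m p t v ε) x‖ ≤
        ((N : ℝ) ^ 2 / ((N : ℝ) - 1)) / (⨅ i, ‖x - p i‖) := by
  intro x hx
  obtain ⟨i₁, hi₁⟩ := htpos
  have : Nonempty (Fin m) := ⟨i₁⟩
  set q : ℝ := N / (N - 1)
  have hq : 1 ≤ q := (HolderConjugate.conjExponent (Nat.one_lt_cast.mpr hN)).symm.lt.le
  have hNq : N * q = (N : ℝ) ^ 2 / (N - 1) := by ring
  set M := max ε (⨅ i, ‖x - p i‖)
  have hM : 0 < M := hε.trans_le (le_max_left _ _)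
  have hbubble (i : Fin m) := norm_fderiv_bubble_le (n := N) hε hq (hx i) hM
    (max_le_max le_rfl (ciInf_le (Finite.bddBelow_range _) i))
  have hc (i : Fin m) : 0 ≤ t i * (v i)⁻¹ := mul_nonneg (ht0 i) (inv_nonneg.mpr (hv i).le)
  set S := fun y => ∑ i, t i * (v i)⁻¹ * bubble ε q N (p i) y
  have hφ : phiTilde N m p t v ε = fun y => log (S y) := rfl
  have hSdiff : DifferentiableAt ℝ S x :=
    DifferentiableAt.fun_sum fun i _ => (hbubble i).1.const_mul _
  have hSpos : 0 < S x := Finset.sum_pos' (fun i _ => mul_nonneg (hc i) (bubble_pos hε).le)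
    ⟨i₁, Finset.mem_univ _, mul_pos (mul_pos hi₁ (inv_pos.mpr (hv i₁))) (bubble_pos hε)⟩
  have hgrad : ‖gradient (phiTilde N m p t v ε) x‖ ≤ (N : ℝ) ^ 2 / (N - 1) / M := by
    rw [gradient, LinearIsometryEquiv.norm_map, hφ, ← hNq]
    exact norm_fderiv_log_le hSdiff hSpos
      (norm_fderiv_sum_mul_le (fun i => (hbubble i).1) hc fun i => (hbubble i).2)
  have hinf : 0 < ⨅ i, ‖x - p i‖ := by
    obtain ⟨i, hi⟩ := exists_eq_ciInf_of_finite (f := fun i => ‖x - p i‖)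
    exact hi ▸ norm_pos_iff.mpr (sub_ne_zero.mpr (hx i))
  have hC : (0 : ℝ) ≤ N ^ 2 / (N - 1) := hNq ▸ by positivity
  exact ⟨hφ ▸ hSdiff.log hSpos.ne', hgrad,
    hgrad.trans (div_le_div_of_nonneg_left hC hε (le_max_left _ _)),
    hgrad.trans (div_le_div_of_nonneg_left hC hinf (le_max_right _ _))⟩

/-- Pointwise gradient bounds for the logarithmic sum of bubbles away
from the singular points. -/
theorem phiTilde_gradient_bound (N m : ℕ) (hN : 2 ≤ N) (hm : 1 ≤ m)
    (p : Fin m → EuclideanSpace ℝ (Fin N)) (t : Fin m → ℝ)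
    (ht0 : ∀ i, 0 ≤ t i) (ht1 : (∑ i, t i) = 1) (htpos : ∃ i, 0 < t i)
    (v : Fin m → ℝ) (hv : ∀ i, 0 < v i) (ε : ℝ) (hε : 0 < ε) :
    ∀ x : EuclideanSpace ℝ (Fin N), (∀ i, x ≠ p i) →
      DifferentiableAt ℝ (phiTilde N m p t v ε) x ∧
      ‖gradient (phiTilde N m p t v ε) x‖ ≤
        ((N : ℝ) ^ 2 / ((N : ℝ) - 1)) / max ε (⨅ i, ‖x - p i‖) ∧
      ‖gradient (phiTilde N m p t v ε) x‖ ≤ ((N : ℝ) ^ 2 / ((N : ℝ) - 1)) / ε ∧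
      ‖gradient (phiTilde N m p t v ε) x‖ ≤
        ((N : ℝ) ^ 2 / ((N : ℝ) - 1)) / (⨅ i, ‖x - p i‖) :=
  phiTilde_gradient_bound_general N m hN p t ht0 htpos v hv ε hε
end

section
/- Let N ≥ 2 be an integer, Ω ⊂ ℝ^N a nonempty bounded open set, C_0 ≥ 1, and let V : ℝ^N → ℝ be Lipschitz with constant C_0 and satisfy 1/C_0 ≤ V(x) ≤ C_0 on the closure of Ω. Let λ > c_N. Then the functional J_λ(u) = (1/N)∫_Ω |∇u|^N dx − λ log(∫_Ω V e^u dx) is unbounded from below on compactly supported C¹ functions: for every M > 0 there exists a C¹ function u : ℝ^N → ℝ with compact support contained in Ω such that (1/N) ∫_Ω |∇u|^N dx − λ log( ∫_Ω V e^u dx ) ≤ −M. -/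
/-!
Moser's functions `u(x) = g (log (R / ‖x - x₀‖))`, where `g` has slope at most `γ` on `[0, T]`,
vanishes on `(-∞, 0]` and is constant, `≥ γ (T - 2)`, on `[T, ∞)`, satisfy
`∫ ‖∇u‖^N ≤ γ^N ∫_{R e^{-T} ≤ ‖x - x₀‖ ≤ R} ‖x - x₀‖^{-N} = N ω_N γ^N T`, while `u = g(T)` on the
ball of radius `R e^{-T}` gives `∫ V e^u ≥ C₀⁻¹ e^{γ (T - 2)} ω_N R^N e^{-N T}`. Hence
`J_λ(u) ≤ (ω_N γ^N - λ (γ - N)) T + O(1)` as `T → ∞`. The choice `γ = N² / (N - 1)` makes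
`ω_N γ^N = c_N (γ - N)`, so the slope is `(c_N - λ) (γ - N) < 0`.
-/

open MeasureTheory Real Metric Set
open scoped ENNReal

noncomputable def trapezoid (T t : ℝ) : ℝ := max 0 (min 1 (min t (T - t)))

lemma continuous_trapezoid (T : ℝ) : Continuous (trapezoid T) := by
  unfold trapezoid; fun_prop

lemma trapezoid_nonneg (T t : ℝ) : 0 ≤ trapezoid T t := le_max_left _ _

lemma trapezoid_le_one (T t : ℝ) : trapezoid T t ≤ 1 :=
  max_le zero_le_one (min_le_left _ _)

lemma trapezoid_of_nonpos (T : ℝ) {t : ℝ} (ht : t ≤ 0) : trapezoid T t = 0 :=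
  max_eq_left ((min_le_right _ _).trans ((min_le_left _ _).trans ht))

lemma trapezoid_of_le (T : ℝ) {t : ℝ} (ht : T ≤ t) : trapezoid T t = 0 :=
  max_eq_left ((min_le_right _ _).trans ((min_le_right _ _).trans (by linarith)))

lemma trapezoid_of_mem_Icc {T t : ℝ} (ht : t ∈ Icc 1 (T - 1)) : trapezoid T t = 1 := by
  rw [trapezoid, min_eq_left (le_min ht.1 (by linarith [ht.2])), max_eq_right zero_le_one]

noncomputable def moserProfile (γ T s : ℝ) : ℝ := γ * ∫ t in (0 : ℝ)..s, trapezoid T t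

lemma hasDerivAt_moserProfile (γ T s : ℝ) :
    HasDerivAt (moserProfile γ T) (γ * trapezoid T s) s :=
  ((continuous_trapezoid T).integral_hasStrictDerivAt 0 s).hasDerivAt.const_mul γ

lemma contDiff_moserProfile (γ T : ℝ) : ContDiff ℝ 1 (moserProfile γ T) := by
  have hderiv : deriv (moserProfile γ T) = fun s ↦ γ * trapezoid T s :=
    funext fun s ↦ (hasDerivAt_moserProfile γ T s).deriv
  exact contDiff_one_iff_deriv.2 ⟨fun s ↦ (hasDerivAt_moserProfile γ T s).differentiableAt,
    hderiv ▸ continuous_const.mul (continuous_trapezoid T)⟩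

lemma moserProfile_of_nonpos (γ T : ℝ) {s : ℝ} (hs : s ≤ 0) : moserProfile γ T s = 0 := by
  have : ∫ t in (0 : ℝ)..s, trapezoid T t = ∫ _ in (0 : ℝ)..s, (0 : ℝ) :=
    intervalIntegral.integral_congr fun t ht ↦
      trapezoid_of_nonpos T (by rw [uIcc_of_ge hs] at ht; exact ht.2)
  simp [moserProfile, this]

lemma moserProfile_of_le (γ : ℝ) {T s : ℝ} (hs : T ≤ s) :
    moserProfile γ T s = moserProfile γ T T := by
  have hint := (continuous_trapezoid T).intervalIntegrable (μ := volume)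
  have : ∫ t in T..s, trapezoid T t = ∫ _ in T..s, (0 : ℝ) :=
    intervalIntegral.integral_congr fun t ht ↦
      trapezoid_of_le T (by rw [uIcc_of_le hs] at ht; exact ht.1)
  rw [moserProfile, moserProfile, ← intervalIntegral.integral_add_adjacent_intervals
    (hint 0 T) (hint T s), this]
  simp

lemma mul_sub_two_le_moserProfile {γ T : ℝ} (hγ : 0 ≤ γ) (hT : 2 ≤ T) :
    γ * (T - 2) ≤ moserProfile γ T T := by
  have hplateau : ∫ t in (1 : ℝ)..(T - 1), trapezoid T t = T - 2 := by
    rw [intervalIntegral.integral_congr (g := fun _ ↦ (1 : ℝ))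
      fun t ht ↦ trapezoid_of_mem_Icc (by rwa [uIcc_of_le (by linarith)] at ht)]
    simp only [intervalIntegral.integral_const, smul_eq_mul, mul_one]
    ring
  refine mul_le_mul_of_nonneg_left (hplateau ▸ ?_) hγ
  exact intervalIntegral.integral_mono_interval zero_le_one (by linarith) (by linarith)
    (.of_forall (trapezoid_nonneg T)) ((continuous_trapezoid T).intervalIntegrable _ _)

section MoserFunction

variable {E : Type*} [NormedAddCommGroup E] {γ T R : ℝ} {x₀ x : E}

open Classical in
/-- `x ↦ g (log (R / ‖x - x₀‖))` with `g = moserProfile γ T`; the centre gets its limit value `g T`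
by hand, as `log 0 = 0`. -/
noncomputable def moserFunction (γ T R : ℝ) (x₀ x : E) : ℝ :=
  if x = x₀ then moserProfile γ T T else moserProfile γ T (log R - log ‖x - x₀‖)

lemma moserFunction_of_norm_sub_le (hR : 0 < R) (hx : ‖x - x₀‖ ≤ R * exp (-T)) :
    moserFunction γ T R x₀ x = moserProfile γ T T := by
  rw [moserFunction]
  split_ifs with h
  · rfl
  have hlog := log_le_log (norm_pos_iff.2 (sub_ne_zero.2 h)) hx
  rw [log_mul hR.ne' (exp_pos _).ne', log_exp] at hlog
  exact moserProfile_of_le γ (by linarith)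

lemma moserFunction_of_le_norm_sub (hR : 0 < R) (hx : R ≤ ‖x - x₀‖) :
    moserFunction γ T R x₀ x = 0 := by
  have hne : x ≠ x₀ := by rintro rfl; rw [sub_self, norm_zero] at hx; linarith
  rw [moserFunction, if_neg hne]
  exact moserProfile_of_nonpos γ T (by linarith [log_le_log hR hx])

lemma moserFunction_eventuallyEq_of_ne (hx : x ≠ x₀) :
    moserFunction γ T R x₀ =ᶠ[nhds x] fun y ↦ moserProfile γ T (log R - log ‖y - x₀‖) :=
  Filter.eventually_of_mem (isOpen_ne.mem_nhds hx) fun _ hy ↦ if_neg hy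

lemma moserFunction_eventuallyEq_const (hR : 0 < R) :
    moserFunction γ T R x₀ =ᶠ[nhds x₀] fun _ ↦ moserProfile γ T T :=
  Filter.eventually_of_mem (ball_mem_nhds x₀ (by positivity : 0 < R * exp (-T))) fun _ hy ↦
    moserFunction_of_norm_sub_le hR (mem_ball_iff_norm.1 hy).le

lemma tsupport_moserFunction_subset (hR : 0 < R) :
    tsupport (moserFunction γ T R x₀) ⊆ closedBall x₀ R := by
  refine closure_minimal (fun x hx ↦ ?_) isClosed_closedBall
  by_contra h
  rw [mem_closedBall_iff_norm, not_le] at h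
  exact hx (moserFunction_of_le_norm_sub hR h.le)

variable [InnerProductSpace ℝ E]

lemma contDiffAt_log_norm_sub (hx : x ≠ x₀) :
    ContDiffAt ℝ 1 (fun y ↦ log ‖y - x₀‖) x :=
  ((contDiffAt_id.sub contDiffAt_const).norm ℝ (sub_ne_zero.2 hx)).log
    (norm_ne_zero_iff.2 (sub_ne_zero.2 hx))

lemma contDiff_moserFunction (hR : 0 < R) : ContDiff ℝ 1 (moserFunction γ T R x₀) := by
  refine contDiff_iff_contDiffAt.2 fun x ↦ ?_
  by_cases hx : x = x₀
  · subst hx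
    exact contDiffAt_const.congr_of_eventuallyEq (moserFunction_eventuallyEq_const hR)
  · exact ((contDiff_moserProfile γ T).contDiffAt.comp x
      (contDiffAt_const.sub (contDiffAt_log_norm_sub hx))).congr_of_eventuallyEq
      (moserFunction_eventuallyEq_of_ne hx)

lemma norm_fderiv_log_norm_sub_le (hx : x ≠ x₀) :
    ‖fderiv ℝ (fun y ↦ log ‖y - x₀‖) x‖ ≤ ‖x - x₀‖⁻¹ := by
  have hpos : 0 < ‖x - x₀‖ := norm_pos_iff.2 (sub_ne_zero.2 hx)
  have hnorm : HasFDerivAt (fun y ↦ ‖y - x₀‖) (fderiv ℝ norm (x - x₀)) x := by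
    rw [← fderiv_comp_sub]
    exact ((contDiffAt_id.sub contDiffAt_const).norm ℝ (sub_ne_zero.2 hx)).differentiableAt
      one_ne_zero |>.hasFDerivAt
  rw [(hnorm.log hpos.ne').fderiv, norm_smul, norm_inv, norm_norm]
  exact mul_le_of_le_one_right (by positivity)
    (by simpa using norm_fderiv_le_of_lipschitz ℝ lipschitzWith_one_norm (x₀ := x - x₀))

lemma norm_fderiv_moserFunction_le (hγ : 0 ≤ γ) (hR : 0 < R) (x : E) :
    ‖fderiv ℝ (moserFunction γ T R x₀) x‖ ≤
      (Icc (R * exp (-T)) R).indicator (fun r ↦ γ / r) ‖x - x₀‖ := by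
  have hrhs : 0 ≤ (Icc (R * exp (-T)) R).indicator (fun r ↦ γ / r) ‖x - x₀‖ :=
    indicator_nonneg (fun r hr ↦ div_nonneg hγ (le_trans (by positivity) hr.1)) _
  by_cases hx : x = x₀
  · subst hx
    rw [(moserFunction_eventuallyEq_const hR).fderiv_eq, fderiv_const_apply, norm_zero]
    exact hrhs
  have hpos : 0 < ‖x - x₀‖ := norm_pos_iff.2 (sub_ne_zero.2 hx)
  have hlog : HasFDerivAt (fun y ↦ log R - log ‖y - x₀‖)
      (-fderiv ℝ (fun y ↦ log ‖y - x₀‖) x) x := by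
    simpa using ((contDiffAt_log_norm_sub hx).differentiableAt one_ne_zero).hasFDerivAt.const_sub
      (log R)
  set s := log R - log ‖x - x₀‖
  have hslope : γ * trapezoid T s * ‖x - x₀‖⁻¹ ≤
      (Icc (R * exp (-T)) R).indicator (fun r ↦ γ / r) ‖x - x₀‖ := by
    by_cases hmem : ‖x - x₀‖ ∈ Icc (R * exp (-T)) R
    · rw [indicator_of_mem hmem, div_eq_mul_inv]
      gcongr
      exact mul_le_of_le_one_right hγ (trapezoid_le_one T s)
    · have hzero : trapezoid T s = 0 := by
        rcases not_and_or.1 hmem with hlt | hlt <;> rw [not_le] at hlt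
        · refine trapezoid_of_le T ?_
          have := log_lt_log hpos hlt
          rw [log_mul hR.ne' (exp_pos _).ne', log_exp] at this
          linarith
        · exact trapezoid_of_nonpos T (by linarith [log_lt_log hR hlt])
      rw [hzero, mul_zero, zero_mul]
      exact hrhs
  have hcomp : HasFDerivAt (fun y ↦ moserProfile γ T (log R - log ‖y - x₀‖))
      ((γ * trapezoid T s) • -fderiv ℝ (fun y ↦ log ‖y - x₀‖) x) x :=
    (hasDerivAt_moserProfile γ T s).comp_hasFDerivAt (h₂ := moserProfile γ T) x hlog
  rw [(moserFunction_eventuallyEq_of_ne hx).fderiv_eq, hcomp.fderiv, norm_smul, norm_neg,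
    Real.norm_of_nonneg (mul_nonneg hγ (trapezoid_nonneg T s))]
  exact (mul_le_mul_of_nonneg_left (norm_fderiv_log_norm_sub_le hx)
    (mul_nonneg hγ (trapezoid_nonneg T s))).trans hslope

end MoserFunction

lemma omegaN_pos (N : ℕ) : 0 < omegaN N :=
  ENNReal.toReal_pos (measure_ball_pos _ _ one_pos).ne' measure_ball_lt_top.ne

section Euclidean

variable {N : ℕ}

lemma measureReal_ball_eq (x₀ : EuclideanSpace ℝ (Fin N)) {a : ℝ} (ha : 0 < a) :
    volume.real (ball x₀ a) = a ^ N * omegaN N := by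
  rw [measureReal_def, Measure.addHaar_ball_of_pos volume x₀ ha, ENNReal.toReal_mul,
    ENNReal.toReal_ofReal (by positivity), finrank_euclideanSpace_fin, omegaN]

lemma pow_pred_mul_indicator_inv_pow (hN : 1 ≤ N) {a : ℝ} (ha : 0 < a) (R : ℝ) :
    (fun y : ℝ ↦ y ^ (N - 1) • (Icc a R).indicator (fun r ↦ r⁻¹ ^ N) y) =
      (Icc a R).indicator (fun y ↦ y⁻¹) := by
  ext y
  by_cases hy : y ∈ Icc a R
  · have hy0 : y ≠ 0 := (ha.trans_le hy.1).ne'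
    rw [smul_eq_mul, indicator_of_mem hy, indicator_of_mem hy, inv_pow, pow_sub₀ y hy0 hN,
      pow_one]
    field_simp
  · simp [hy]

lemma integrable_indicator_Icc_inv_pow_norm_sub (hN : 1 ≤ N) (x₀ : EuclideanSpace ℝ (Fin N))
    {a R : ℝ} (ha : 0 < a) :
    Integrable fun x ↦ (Icc a R).indicator (fun r ↦ r⁻¹ ^ N) ‖x - x₀‖ := by
  have : Nontrivial (EuclideanSpace ℝ (Fin N)) :=
    Module.nontrivial_of_finrank_pos (R := ℝ) (by rw [finrank_euclideanSpace_fin]; omega)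
  refine Integrable.comp_sub_right (f := fun x ↦ (Icc a R).indicator (fun r ↦ r⁻¹ ^ N) ‖x‖) ?_ x₀
  rw [integrable_fun_norm_addHaar, finrank_euclideanSpace_fin,
    pow_pred_mul_indicator_inv_pow hN ha]
  refine (integrable_indicator_iff measurableSet_Icc).2 ?_ |>.integrableOn
  exact (continuousOn_inv₀.mono fun y hy ↦ (ha.trans_le hy.1).ne').integrableOn_Icc

lemma integral_indicator_Icc_inv_pow_norm_sub (hN : 1 ≤ N) (x₀ : EuclideanSpace ℝ (Fin N))
    {a R : ℝ} (ha : 0 < a) (haR : a ≤ R) :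
    ∫ x, (Icc a R).indicator (fun r ↦ r⁻¹ ^ N) ‖x - x₀‖ = N * omegaN N * log (R / a) := by
  have : Nontrivial (EuclideanSpace ℝ (Fin N)) :=
    Module.nontrivial_of_finrank_pos (R := ℝ) (by rw [finrank_euclideanSpace_fin]; omega)
  rw [integral_sub_right_eq_self (fun x ↦ (Icc a R).indicator (fun r ↦ r⁻¹ ^ N) ‖x‖),
    integral_fun_norm_addHaar, finrank_euclideanSpace_fin, pow_pred_mul_indicator_inv_pow hN ha,
    setIntegral_indicator measurableSet_Icc,
    inter_eq_self_of_subset_right (fun y hy ↦ mem_Ioi.2 (ha.trans_le hy.1) : Icc a R ⊆ Ioi 0),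
    integral_Icc_eq_integral_Ioc,
    ← intervalIntegral.integral_of_le haR, integral_inv_of_pos ha (ha.trans_le haR), nsmul_eq_mul,
    smul_eq_mul, omegaN, measureReal_def, mul_assoc]

end Euclidean

lemma norm_gradient_eq_norm_fderiv {F : Type*} [NormedAddCommGroup F] [InnerProductSpace ℝ F]
    [CompleteSpace F] (f : F → ℝ) (x : F) : ‖gradient f x‖ = ‖fderiv ℝ f x‖ :=
  (InnerProductSpace.toDual ℝ F).symm.norm_map _

section MoserEuclidean

variable {N : ℕ} {γ T R : ℝ} {x₀ : EuclideanSpace ℝ (Fin N)}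

lemma integral_norm_gradient_moserFunction_pow_le (hN : 1 ≤ N) (hγ : 0 ≤ γ) (hR : 0 < R)
    (hT : 0 ≤ T) (Ω : Set (EuclideanSpace ℝ (Fin N))) :
    ∫ x in Ω, ‖gradient (moserFunction γ T R x₀) x‖ ^ N ≤ N * omegaN N * γ ^ N * T := by
  set a := R * exp (-T)
  have ha : 0 < a := by positivity
  have hlog : log (R / a) = T := by
    rw [log_div hR.ne' ha.ne', log_mul hR.ne' (exp_pos _).ne', log_exp]; ring
  set b := fun x : EuclideanSpace ℝ (Fin N) ↦
    γ ^ N * (Icc a R).indicator (fun r ↦ r⁻¹ ^ N) ‖x - x₀‖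
  have hb : Integrable b := (integrable_indicator_Icc_inv_pow_norm_sub hN x₀ ha).const_mul _
  have hb0 : 0 ≤ b := fun x ↦
    mul_nonneg (by positivity)
      (indicator_nonneg (fun r hr ↦ by have := ha.trans_le hr.1; positivity) _)
  have hgrad (x) : ‖gradient (moserFunction γ T R x₀) x‖ ^ N ≤ b x := by
    rw [norm_gradient_eq_norm_fderiv]
    refine (pow_le_pow_left₀ (norm_nonneg _) (norm_fderiv_moserFunction_le hγ hR x) N).trans_eq ?_
    by_cases hx : ‖x - x₀‖ ∈ Icc a R
    · rw [indicator_of_mem hx, div_pow, div_eq_mul_inv, ← inv_pow]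
      simp only [b, indicator_of_mem hx]
    · rw [indicator_of_notMem hx, zero_pow (by omega)]
      simp only [b, indicator_of_notMem hx, mul_zero]
  calc ∫ x in Ω, ‖gradient (moserFunction γ T R x₀) x‖ ^ N
      ≤ ∫ x in Ω, b x :=
        integral_mono_of_nonneg (.of_forall fun _ ↦ by positivity) hb.integrableOn
          (.of_forall hgrad)
    _ ≤ ∫ x, b x := setIntegral_le_integral hb (.of_forall hb0)
    _ = N * omegaN N * γ ^ N * T := by
        rw [integral_const_mul, integral_indicator_Icc_inv_pow_norm_sub hN x₀ ha
          (mul_le_of_le_one_right hR.le (exp_le_one_iff.2 (neg_nonpos.2 hT))), hlog]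
        ring

lemma log_integral_mul_exp_moserFunction_ge {Ω : Set (EuclideanSpace ℝ (Fin N))}
    (hΩm : MeasurableSet Ω) (hΩb : Bornology.IsBounded Ω) (hR : 0 < R)
    (hRΩ : closedBall x₀ R ⊆ Ω) (hγ : 0 ≤ γ) (hT : 2 ≤ T) {V : EuclideanSpace ℝ (Fin N) → ℝ}
    (hVc : Continuous V) {c : ℝ} (hc : 0 < c) (hV : ∀ x ∈ Ω, c ≤ V x) :
    log c + γ * (T - 2) + N * (log R - T) + log (omegaN N) ≤
      log (∫ x in Ω, V x * exp (moserFunction γ T R x₀ x)) := by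
  set u := moserFunction γ T R x₀
  set a := R * exp (-T)
  have ha : 0 < a := by positivity
  have hball : ball x₀ a ⊆ Ω :=
    (ball_subset_closedBall.trans (closedBall_subset_closedBall
      (mul_le_of_le_one_right hR.le (exp_le_one_iff.2 (by linarith))))).trans hRΩ
  have hint : IntegrableOn (fun x ↦ V x * exp (u x)) Ω :=
    ((hVc.mul (continuous_exp.comp (contDiff_moserFunction hR).continuous)).continuousOn
      |>.integrableOn_compact hΩb.isCompact_closure).mono_set subset_closure
  have hlower : ∀ x ∈ ball x₀ a, c * exp (γ * (T - 2)) ≤ V x * exp (u x) := fun x hx ↦ by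
    rw [show u x = moserProfile γ T T from
      moserFunction_of_norm_sub_le hR (mem_ball_iff_norm.1 hx).le]
    exact mul_le_mul (hV x (hball hx)) (exp_le_exp.2 (mul_sub_two_le_moserProfile hγ hT))
      (exp_pos _).le ((hc.trans_le (hV x (hball hx))).le)
  have hmass : c * exp (γ * (T - 2)) * (a ^ N * omegaN N) ≤ ∫ x in Ω, V x * exp (u x) := by
    rw [← measureReal_ball_eq x₀ ha]
    calc _ ≤ ∫ x in ball x₀ a, V x * exp (u x) :=
          setIntegral_ge_of_const_le_real measurableSet_ball measure_ball_lt_top.ne hlower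
            (hint.mono_set hball)
      _ ≤ ∫ x in Ω, V x * exp (u x) :=
          setIntegral_mono_set hint (ae_restrict_of_forall_mem hΩm fun x hx ↦
            mul_nonneg (hc.le.trans (hV x hx)) (exp_pos _).le) hball.eventuallyLE
  have hω := omegaN_pos N
  calc _ = log (c * exp (γ * (T - 2)) * (a ^ N * omegaN N)) := by
        rw [log_mul (by positivity) (by positivity), log_mul hc.ne' (exp_pos _).ne', log_exp,
          log_mul (by positivity) hω.ne', log_pow, log_mul hR.ne' (exp_pos _).ne', log_exp]
        ring
    _ ≤ _ := log_le_log (by positivity) hmass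

end MoserEuclidean

lemma cN_pos {N : ℕ} (hN : 2 ≤ N) : 0 < cN N := by
  have : (0 : ℝ) < N - 1 := by
    have : (2 : ℝ) ≤ N := by exact_mod_cast hN
    linarith
  have := omegaN_pos N
  rw [cN]
  positivity

lemma omegaN_mul_pow_eq_cN_mul {N : ℕ} (hN : 2 ≤ N) :
    omegaN N * ((N : ℝ) ^ 2 / (N - 1)) ^ N = cN N * ((N : ℝ) ^ 2 / (N - 1) - N) := by
  have hN1 : (N : ℝ) - 1 ≠ 0 := by
    have : (2 : ℝ) ≤ N := by exact_mod_cast hN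
    linarith
  set γ : ℝ := (N : ℝ) ^ 2 / (N - 1)
  have hγ : γ = N * (γ - N) := by simp only [γ]; field_simp; ring
  have hpow : γ ^ N = γ ^ (N - 1) * γ := by rw [← pow_succ, Nat.sub_add_cancel (by omega)]
  rw [hpow, cN]
  linear_combination (omegaN N * γ ^ (N - 1)) * hγ

/-- For `λ > c_N` the mean field functional `J_λ` is unbounded from below. -/
theorem mean_field_functional_unbounded_below (N : ℕ) (hN : 2 ≤ N)
    (Ω : Set (EuclideanSpace ℝ (Fin N))) (hΩo : IsOpen Ω) (hΩb : Bornology.IsBounded Ω)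
    (hΩne : Ω.Nonempty)
    (C₀ : ℝ) (hC₀ : 1 ≤ C₀) (V : EuclideanSpace ℝ (Fin N) → ℝ)
    (hVlip : LipschitzWith (Real.toNNReal C₀) V)
    (hV : ∀ x ∈ closure Ω, 1 / C₀ ≤ V x ∧ V x ≤ C₀)
    (lam : ℝ) (hlam : cN N < lam) :
    ∀ M : ℝ, 0 < M →
      ∃ u : EuclideanSpace ℝ (Fin N) → ℝ,
        ContDiff ℝ 1 u ∧ HasCompactSupport u ∧ tsupport u ⊆ Ω ∧
        (1 / (N : ℝ)) * (∫ x in Ω, ‖gradient u x‖ ^ N) -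
            lam * Real.log (∫ x in Ω, V x * Real.exp (u x)) ≤ -M := by
  intro M hM
  obtain ⟨x₀, hx₀⟩ := hΩne
  obtain ⟨R, hR, hRΩ⟩ := nhds_basis_closedBall.mem_iff.1 (hΩo.mem_nhds hx₀)
  set γ : ℝ := (N : ℝ) ^ 2 / (N - 1)
  have hN1 : (1 : ℝ) < N := by exact_mod_cast hN
  have hγN : (N : ℝ) < γ := by rw [lt_div_iff₀ (by linarith)]; nlinarith
  have hslope : 0 < (lam - cN N) * (γ - N) := mul_pos (by linarith) (by linarith)
  set K := lam * (log C₀ + 2 * γ - N * log R - log (omegaN N))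
  obtain ⟨T, hTM, hT⟩ := (((Filter.tendsto_id.const_mul_atTop hslope).eventually_ge_atTop
    (K + M)).and (Filter.eventually_ge_atTop 2)).exists
  have hγ : 0 ≤ γ := by linarith
  have henergy := integral_norm_gradient_moserFunction_pow_le (x₀ := x₀) (by omega) hγ hR
    (by linarith : (0 : ℝ) ≤ T) Ω
  have hmass := log_integral_mul_exp_moserFunction_ge hΩo.measurableSet hΩb hR hRΩ
    hγ hT hVlip.continuous (by positivity : 0 < 1 / C₀) fun x hx ↦
      (hV x (subset_closure hx)).1
  have hsupp := tsupport_moserFunction_subset (γ := γ) (T := T) (x₀ := x₀) hR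
  refine ⟨_, contDiff_moserFunction hR,
    (isCompact_closedBall x₀ R).of_isClosed_subset (isClosed_tsupport _) hsupp,
    hsupp.trans hRΩ, ?_⟩
  calc _ ≤ 1 / N * (N * omegaN N * γ ^ N * T) - lam * (log (1 / C₀) + γ * (T - 2) +
        N * (log R - T) + log (omegaN N)) :=
      sub_le_sub (mul_le_mul_of_nonneg_left henergy (by positivity))
        (mul_le_mul_of_nonneg_left hmass (by linarith [cN_pos hN]))
    _ = K - (lam - cN N) * (γ - N) * T := by
      simp only [one_div, log_inv]
      field_simp
      linear_combination T * omegaN_mul_pow_eq_cN_mul hN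
    _ ≤ -M := by rw [id] at hTM; linarith
end

section
/- Let N ≥ 2 be an integer and let U : ℝ^N → ℝ be defined by U(x) = log( F_N / (1 + |x|^{N/(N−1)})^N ), where F_N = N (N²/(N−1))^{N−1}. Then for every x ∈ ℝ^N with x ≠ 0, the vector field x ↦ |∇U(x)|^{N−2} ∇U(x) is differentiable at x and its divergence satisfies Σ_{i=1}^{N} ∂_i ( |∇U|^{N−2} ∂_i U )(x) = − e^{U(x)}; that is, U solves −Δ_N U = e^U pointwise in ℝ^N ∖ {0}. -/
/-
`U` is radial: `U = log F_N - N log (1 + r^p)` with `r = |x|` and `p = N/(N-1)`, so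
`∇U = -(N p r^(p-2) / (1 + r^p)) x`. Because `(p - 1)(N - 1) = 1`, the powers of `r` cancel in
`|∇U|^(N-2) ∇U = -(N p / (1 + r^p))^(N-1) x`, a field of the form `g(r^p) x`. In `ℝ^N` such a field
has divergence `N g(r^p) + p r^p g'(r^p)`, and using `(N - 1) p = N` this collapses to
`-N (N p)^(N-1) / (1 + r^p)^N = -F_N / (1 + r^p)^N = -e^U`.
-/

open MeasureTheory Real Metric Set
open scoped ENNReal

/-- The standard radial solution of the Liouville-type equation. -/
noncomputable def stdBubble (N : ℕ) (x : EuclideanSpace ℝ (Fin N)) : ℝ :=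
  Real.log (FN N / (1 + ‖x‖ ^ ((N : ℝ) / ((N : ℝ) - 1))) ^ N)

/-- The vector field `|∇U|^{N-2} ∇U` associated to the standard bubble. -/
noncomputable def stdBubbleField (N : ℕ) (x : EuclideanSpace ℝ (Fin N)) :
    EuclideanSpace ℝ (Fin N) :=
  ‖gradient (stdBubble N) x‖ ^ (N - 2) • gradient (stdBubble N) x

section Radial

variable {E : Type*} [NormedAddCommGroup E] [InnerProductSpace ℝ E]

noncomputable def radialField (g : ℝ → ℝ) (p : ℝ) (y : E) : E := g (‖y‖ ^ p) • y

theorem HasDerivAt.hasFDerivAt_comp_norm_rpow {g : ℝ → ℝ} {g' p : ℝ} {x : E} (hp : 1 < p)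
    (hg : HasDerivAt g g' (‖x‖ ^ p)) :
    HasFDerivAt (fun y ↦ g (‖y‖ ^ p)) ((g' * (p * ‖x‖ ^ (p - 2))) • innerSL ℝ x) x := by
  rw [mul_smul]
  exact hg.comp_hasFDerivAt x (hasFDerivAt_norm_rpow x hp)

theorem HasDerivAt.hasGradientAt_comp_norm_rpow [CompleteSpace E] {g : ℝ → ℝ} {g' p : ℝ}
    {x : E} (hp : 1 < p) (hg : HasDerivAt g g' (‖x‖ ^ p)) :
    HasGradientAt (fun y ↦ g (‖y‖ ^ p)) ((g' * (p * ‖x‖ ^ (p - 2))) • x) x := by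
  rw [hasGradientAt_iff_hasFDerivAt, map_smul]
  exact hg.hasFDerivAt_comp_norm_rpow hp

theorem HasDerivAt.hasFDerivAt_radialField {g : ℝ → ℝ} {g' p : ℝ} {x : E} (hp : 1 < p)
    (hg : HasDerivAt g g' (‖x‖ ^ p)) :
    HasFDerivAt (radialField g p)
      (g (‖x‖ ^ p) • ContinuousLinearMap.id ℝ E +
        ((g' * (p * ‖x‖ ^ (p - 2))) • innerSL ℝ x).smulRight x) x :=
  (hg.hasFDerivAt_comp_norm_rpow hp).smul (hasFDerivAt_id x)

end Radial

theorem EuclideanSpace.sum_smul_id_add_smulRight_apply_single {n : ℕ} (c : ℝ)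
    (L : EuclideanSpace ℝ (Fin n) →L[ℝ] ℝ) (x : EuclideanSpace ℝ (Fin n)) :
    ∑ i, (c • ContinuousLinearMap.id ℝ (EuclideanSpace ℝ (Fin n)) + L.smulRight x)
      (EuclideanSpace.single i 1) i = n * c + L x := by
  have hL : ∑ i, L (EuclideanSpace.single i 1) * x i = L x := by
    conv_rhs => rw [← (EuclideanSpace.basisFun (Fin n) ℝ).sum_repr x]
    simp [map_sum, mul_comm]
  simp [Finset.sum_add_distrib, hL]

theorem HasDerivAt.sum_fderiv_radialField_apply_single {n : ℕ} {g : ℝ → ℝ} {g' p : ℝ}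
    {x : EuclideanSpace ℝ (Fin n)} (hp : 1 < p) (hg : HasDerivAt g g' (‖x‖ ^ p)) :
    ∑ i, fderiv ℝ (radialField g p) x (EuclideanSpace.single i 1) i =
      n * g (‖x‖ ^ p) + g' * p * ‖x‖ ^ p := by
  rw [(hg.hasFDerivAt_radialField hp).fderiv,
    EuclideanSpace.sum_smul_id_add_smulRight_apply_single]
  have hpow : ‖x‖ ^ (p - 2) * ‖x‖ ^ 2 = ‖x‖ ^ p := by
    rw [← Real.rpow_natCast, ← Real.rpow_add' (norm_nonneg x) (by norm_num; linarith)]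
    norm_num
  simp only [smul_apply, innerSL_apply_apply, real_inner_self_eq_norm_sq, smul_eq_mul]
  linear_combination g' * p * hpow

theorem hasDerivAt_neg_div_one_add_pow (c : ℝ) (m : ℕ) {t : ℝ} (ht : 1 + t ≠ 0) :
    HasDerivAt (fun s ↦ -(c / (1 + s)) ^ m) (m * c ^ m / (1 + t) ^ (m + 1)) t := by
  have h := (hasDerivAt_const t c).fun_div ((hasDerivAt_id t).const_add 1) ht
  refine (h.fun_pow m).fun_neg.congr_deriv ?_
  rcases m with _ | m
  · simp
  · simp only [id, Nat.add_sub_cancel, div_pow]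
    field_simp
    ring

noncomputable def bubbleExp (N : ℕ) : ℝ := N / (N - 1)

section Bubble

variable {N : ℕ}

theorem one_lt_bubbleExp (hN : 2 ≤ N) : 1 < bubbleExp N := by
  have : (2 : ℝ) ≤ N := by exact_mod_cast hN
  rw [bubbleExp, one_lt_div (by linarith)]
  linarith

theorem sub_one_mul_bubbleExp (hN : 2 ≤ N) : ((N : ℝ) - 1) * bubbleExp N = N := by
  have : (2 : ℝ) ≤ N := by exact_mod_cast hN
  rw [bubbleExp, mul_div_cancel₀]
  linarith

theorem FN_eq_mul_pow (N : ℕ) : FN N = N * (N * bubbleExp N) ^ (N - 1) := by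
  rw [FN, bubbleExp, sq, mul_div_assoc]

theorem FN_pos (hN : 2 ≤ N) : 0 < FN N := by
  have := one_lt_bubbleExp hN
  rw [FN_eq_mul_pow]
  have : 0 < N := by omega
  positivity

theorem exp_stdBubble (hN : 2 ≤ N) (y : EuclideanSpace ℝ (Fin N)) :
    exp (stdBubble N y) = FN N / (1 + ‖y‖ ^ bubbleExp N) ^ N :=
  exp_log (by have := FN_pos hN; positivity)

theorem stdBubble_eq (hN : 2 ≤ N) :
    stdBubble N = fun y ↦ log (FN N) - N * log (1 + ‖y‖ ^ bubbleExp N) := by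
  ext y
  rw [stdBubble, log_div (FN_pos hN).ne' (by positivity), log_pow]
  rfl

theorem hasGradientAt_stdBubble (hN : 2 ≤ N) (x : EuclideanSpace ℝ (Fin N)) :
    HasGradientAt (stdBubble N)
      ((-(N / (1 + ‖x‖ ^ bubbleExp N)) * (bubbleExp N * ‖x‖ ^ (bubbleExp N - 2))) • x) x := by
  rw [stdBubble_eq hN]
  refine HasDerivAt.hasGradientAt_comp_norm_rpow (g := fun t ↦ log (FN N) - N * log (1 + t))
    (one_lt_bubbleExp hN) ?_
  have hS : 1 + ‖x‖ ^ bubbleExp N ≠ 0 := by positivity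
  have h := ((((hasDerivAt_id (‖x‖ ^ bubbleExp N)).const_add 1).log hS).const_mul
    (N : ℝ)).const_sub (log (FN N))
  refine h.congr_deriv ?_
  simp [div_eq_mul_inv]

theorem rpow_bubbleExp_sub_one_pow_mul (hN : 2 ≤ N) {r : ℝ} (hr : 0 < r) :
    (r ^ (bubbleExp N - 1)) ^ (N - 2) * r ^ (bubbleExp N - 2) = 1 := by
  have : (N : ℝ) - 1 ≠ 0 := by
    have : (2 : ℝ) ≤ N := by exact_mod_cast hN
    linarith
  rw [← rpow_natCast, ← rpow_mul hr.le, ← rpow_add hr, Nat.cast_sub hN, bubbleExp]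
  convert rpow_zero r
  field_simp
  ring

theorem stdBubbleField_eq (hN : 2 ≤ N) :
    stdBubbleField N =
      radialField (fun t ↦ -(N * bubbleExp N / (1 + t)) ^ (N - 1)) (bubbleExp N) := by
  ext1 y
  rw [stdBubbleField, (hasGradientAt_stdBubble hN y).gradient, radialField, smul_smul]
  rcases eq_or_ne y 0 with rfl | hy
  · simp
  congr 1
  set p := bubbleExp N
  set S := 1 + ‖y‖ ^ p
  have hr : 0 < ‖y‖ := norm_pos_iff.mpr hy
  have hNS : 0 < N / S := by
    have : 0 < S := by positivity
    have : 0 < N := by omega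
    positivity
  have hp : 0 < p * ‖y‖ ^ (p - 2) := by
    have := one_lt_bubbleExp hN
    positivity
  have hr' : ‖y‖ ^ (p - 2) * ‖y‖ = ‖y‖ ^ (p - 1) := by
    rw [← rpow_add_one hr.ne']; ring_nf
  calc ‖(-(N / S) * (p * ‖y‖ ^ (p - 2))) • y‖ ^ (N - 2) * (-(N / S) * (p * ‖y‖ ^ (p - 2)))
      = -(N / S * p) ^ (N - 2 + 1) * ((‖y‖ ^ (p - 1)) ^ (N - 2) * ‖y‖ ^ (p - 2)) := by
        rw [norm_smul, norm_mul, norm_neg, norm_of_nonneg hNS.le, norm_of_nonneg hp.le,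
          mul_assoc (N / S : ℝ), mul_assoc p, hr']
        ring
    _ = -(N * p / S) ^ (N - 1) := by
        rw [rpow_bubbleExp_sub_one_pow_mul hN hr, show N - 2 + 1 = N - 1 by omega]
        ring

end Bubble

/-- The standard bubble solves `−Δ_N U = e^U` pointwise away from the origin: the vector
field `|∇U|^{N-2}∇U` is differentiable there and its divergence equals `−e^U`. -/
theorem stdBubble_solves_liouville (N : ℕ) (hN : 2 ≤ N) :
    ∀ x : EuclideanSpace ℝ (Fin N), x ≠ 0 →
      DifferentiableAt ℝ (stdBubbleField N) x ∧
      (∑ i : Fin N, fderiv ℝ (stdBubbleField N) x (EuclideanSpace.single i 1) i) =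
        -Real.exp (stdBubble N x) := by
  intro x _
  have hp := one_lt_bubbleExp hN
  have hS : 0 < 1 + ‖x‖ ^ bubbleExp N := by positivity
  have hg := hasDerivAt_neg_div_one_add_pow (N * bubbleExp N) (N - 1) hS.ne'
  rw [stdBubbleField_eq hN]
  refine ⟨(hg.hasFDerivAt_radialField hp).differentiableAt, ?_⟩
  rw [hg.sum_fderiv_radialField_apply_single hp, exp_stdBubble hN, FN_eq_mul_pow]
  have hNp := sub_one_mul_bubbleExp hN
  generalize (N : ℝ) * bubbleExp N = c
  generalize bubbleExp N = p at hNp hS ⊢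
  generalize ‖x‖ ^ p = u at hS ⊢
  obtain ⟨k, rfl⟩ : ∃ k, N = k + 1 := ⟨N - 1, by omega⟩
  simp only [Nat.add_sub_cancel, div_pow] at hNp ⊢
  push_cast at hNp ⊢
  field_simp
  linear_combination c ^ k * u * (1 + u) ^ k * hNp
end

section
/- Let N ≥ 2 be an integer, ε > 0 and p ∈ ℝ^N. Then ∫_{ℝ^N} F_N ε^{N/(N−1)} / ( ε^{N/(N−1)} + |x−p|^{N/(N−1)} )^N dx = N (N²/(N−1))^{N−1} ω_N = c_N, where F_N = N (N²/(N−1))^{N−1}. In other words, the standard bubble U_{ε,p}(x) = log( F_N ε^{N/(N−1)} / (ε^{N/(N−1)} + |x−p|^{N/(N−1)})^N ) satisfies ∫_{ℝ^N} e^{U_{ε,p}} dx = c_N. -/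
open MeasureTheory Real Metric Set
open scoped ENNReal

/-! With `q = N/(N-1)` and `B = ε^q`, polar coordinates reduce the integral to the radial one
`N ω_N ∫₀^∞ r^(N-1) B / (B + r^q)^N dr`. Because `q (N-1) = N`, the integrand has the explicit
primitive `r^N / (N (B + r^q)^(N-1))`, which vanishes at `0` and tends to `1/N` at infinity; so
`∫ B / (B + ‖x - p‖^q)^N dx = ω_N` for every `B > 0`, and the factor `F_N` gives `c_N`. -/

open Filter Topology

theorem hasDerivAt_pow_succ_div_add_rpow_pow {n : ℕ} {q B x : ℝ} (hqn : q * n = n + 1)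
    (hB : 0 ≤ B) (hx : 0 < x) :
    HasDerivAt (fun r : ℝ => r ^ (n + 1) / (B + r ^ q) ^ n)
      ((n + 1) * (x ^ n * (B / (B + x ^ q) ^ (n + 1)))) x := by
  obtain ⟨m, rfl⟩ : ∃ m, n = m + 1 := Nat.exists_eq_add_one.mpr <| Nat.pos_of_ne_zero <| by
    rintro rfl; norm_num at hqn
  have hnum : HasDerivAt (fun r : ℝ => r ^ (m + 2)) ((m + 2 : ℕ) * x ^ (m + 1)) x :=
    hasDerivAt_pow (m + 2) x
  have hden : HasDerivAt (fun r : ℝ => (B + r ^ q) ^ (m + 1))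
      ((m + 1 : ℕ) * (B + x ^ q) ^ m * (q * x ^ (q - 1))) x :=
    ((hasDerivAt_rpow_const (Or.inl hx.ne')).const_add B).pow (m + 1)
  refine (hnum.div hden (by positivity)).congr_deriv ?_
  have hrpow : x * x ^ (q - 1) = x ^ q := by
    rw [mul_comm, ← rpow_add_one hx.ne', sub_add_cancel]
  have hnumerator : ((m + 2 : ℕ) : ℝ) * x ^ (m + 1) * (B + x ^ q) ^ (m + 1)
      - x ^ (m + 2) * ((m + 1 : ℕ) * (B + x ^ q) ^ m * (q * x ^ (q - 1)))
      = (m + 2) * B * x ^ (m + 1) * (B + x ^ q) ^ m := by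
    push_cast at hqn ⊢
    linear_combination (-(x ^ (m + 1) * (B + x ^ q) ^ m)) * ((m + 1) * q * hrpow + x ^ q * hqn)
  rw [hnumerator]
  push_cast
  field_simp
  ring

theorem tendsto_div_const_add_atTop (B : ℝ) :
    Tendsto (fun t : ℝ => t / (B + t)) atTop (𝓝 1) := by
  have h : Tendsto (fun t : ℝ => 1 - B / (B + t)) atTop (𝓝 (1 - 0)) :=
    tendsto_const_nhds.sub <|
      tendsto_const_nhds.div_atTop (tendsto_atTop_add_const_left _ B tendsto_id)
  rw [sub_zero] at h
  refine h.congr' ?_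
  filter_upwards [eventually_gt_atTop (-B)] with t ht
  field_simp [show B + t ≠ 0 by linarith]
  ring

theorem integral_Ioi_pow_mul_div_add_rpow_pow {n : ℕ} {q B : ℝ} (hqn : q * n = n + 1)
    (hB : 0 < B) :
    ∫ y in Ioi (0 : ℝ), y ^ n * (B / (B + y ^ q) ^ (n + 1)) = 1 / (n + 1) := by
  have hq : 0 < q := by nlinarith [(Nat.cast_nonneg n : (0 : ℝ) ≤ n)]
  set G : ℝ → ℝ := fun r => r ^ (n + 1) / (B + r ^ q) ^ n
  have hG0 : ContinuousWithinAt G (Ici 0) 0 := by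
    refine ContinuousAt.continuousWithinAt ?_
    have : (B + (0 : ℝ) ^ q) ^ n ≠ 0 := by rw [zero_rpow hq.ne']; positivity
    exact (continuousAt_pow _ _).div
      ((continuousAt_const.add (continuousAt_rpow_const _ _ (Or.inr hq.le))).pow _) this
  have hGtop : Tendsto G atTop (𝓝 1) := by
    have h := ((tendsto_div_const_add_atTop B).comp (tendsto_rpow_atTop hq)).pow n
    rw [one_pow] at h
    refine h.congr' ?_
    filter_upwards [eventually_gt_atTop 0] with r hr
    have hpow : (r ^ q) ^ n = r ^ (n + 1) := by
      rw [← rpow_mul_natCast hr.le, hqn]; exact_mod_cast rpow_natCast r (n + 1)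
    simp only [Function.comp, G, div_pow, hpow]
  have hderiv := integral_Ioi_of_hasDerivAt_of_nonneg hG0
    (fun x hx => hasDerivAt_pow_succ_div_add_rpow_pow hqn hB.le hx)
    (fun x (hx : 0 < x) => by have := rpow_pos_of_pos hx q; positivity) hGtop
  rw [integral_const_mul] at hderiv
  simp only [G, zero_pow n.succ_ne_zero, zero_div, sub_zero] at hderiv
  rw [eq_div_iff (by positivity)]
  linarith

theorem integral_div_add_norm_sub_rpow_pow {E : Type*} [NormedAddCommGroup E] [NormedSpace ℝ E]
    [FiniteDimensional ℝ E] [MeasurableSpace E] [BorelSpace E] (μ : Measure E)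
    [μ.IsAddHaarMeasure] {n : ℕ} (hE : Module.finrank ℝ E = n + 1) {q B : ℝ}
    (hqn : q * n = n + 1) (hB : 0 < B) (p : E) :
    ∫ x, B / (B + ‖x - p‖ ^ q) ^ (n + 1) ∂μ = μ.real (ball 0 1) := by
  have : Nontrivial E := Module.nontrivial_of_finrank_eq_succ hE
  rw [integral_sub_right_eq_self (fun x => B / (B + ‖x‖ ^ q) ^ (n + 1)) p,
    integral_fun_norm_addHaar μ (fun r => B / (B + r ^ q) ^ (n + 1)), hE, Nat.add_sub_cancel]
  simp only [smul_eq_mul, nsmul_eq_mul]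
  rw [integral_Ioi_pow_mul_div_add_rpow_pow hqn hB]
  push_cast
  field_simp

/-- The total mass of the standard bubble `e^{U_{ε,p}}` equals `c_N`. -/
theorem bubble_total_mass (N : ℕ) (hN : 2 ≤ N) (ε : ℝ) (hε : 0 < ε)
    (p : EuclideanSpace ℝ (Fin N)) :
    (∫ x : EuclideanSpace ℝ (Fin N),
        FN N * ε ^ ((N : ℝ) / ((N : ℝ) - 1)) /
          (ε ^ ((N : ℝ) / ((N : ℝ) - 1)) + ‖x - p‖ ^ ((N : ℝ) / ((N : ℝ) - 1))) ^ N) =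
      cN N := by
  obtain ⟨n, rfl⟩ : ∃ n, N = n + 1 := ⟨N - 1, by omega⟩
  have hn : (n : ℝ) ≠ 0 := by exact_mod_cast (by omega : n ≠ 0)
  have hqn : ((n + 1 : ℕ) : ℝ) / ((n + 1 : ℕ) - 1) * n = n + 1 := by
    push_cast; rw [add_sub_cancel_right, div_mul_cancel₀ _ hn]
  simp_rw [mul_div_assoc]
  rw [integral_const_mul, integral_div_add_norm_sub_rpow_pow volume finrank_euclideanSpace_fin
    hqn (by positivity) p]
  rfl
end
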